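/- arXiv:1602.02589 — 4 statements merged into one kernel-verified Lean document; each statement's English description precedes it below -/
import Mathlib

section
/- If a graph G is f-AT for a function f from V(G) to the natural numbers, then G is f-choosable. -/
open scoped Classical

namespace ATPaper

variable {V : Type*}

/-- Out-degree of `v` in the digraph given by the arc set `A`. -/
noncomputable def outDeg (A : Finset (V × V)) (v : V) : ℕ :=
  (A.filter fun e => e.1 = v).card

/-- In-degree of `v` in the digraph given by the arc set `A`. -/
noncomputable def inDeg (A : Finset (V × V)) (v : V) : ℕ :=
  (A.filter fun e => e.2 = v).card

/-- `A` is an orientation of the simple graph `G`: every edge of `G` gets exactly one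
direction, and every arc of `A` comes from an edge of `G`. -/
def IsOrientation (G : SimpleGraph V) (A : Finset (V × V)) : Prop :=
  (∀ u v : V, G.Adj u v ↔ ((u, v) ∈ A ∨ (v, u) ∈ A)) ∧
    ∀ u v : V, (u, v) ∈ A → (v, u) ∉ A

/-- Number of spanning eulerian subdigraphs of `A` with an even number of arcs. -/
noncomputable def EE (A : Finset (V × V)) : ℕ :=
  (A.powerset.filter fun B => (∀ v, outDeg B v = inDeg B v) ∧ Even B.card).card

/-- Number of spanning eulerian subdigraphs of `A` with an odd number of arcs. -/
noncomputable def EO (A : Finset (V × V)) : ℕ :=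
  (A.powerset.filter fun B => (∀ v, outDeg B v = inDeg B v) ∧ ¬ Even B.card).card

/-- `G` is `f`-Alon–Tarsi. -/
def IsfAT (G : SimpleGraph V) (f : V → ℕ) : Prop :=
  ∃ A : Finset (V × V), IsOrientation G A ∧ EE A ≠ EO A ∧ ∀ v, outDeg A v + 1 ≤ f v

/-- The Alon–Tarsi number of `G`. -/
noncomputable def AT (G : SimpleGraph V) : ℕ := sInf {k : ℕ | IsfAT G fun _ => k}

/-- `G` is `k`-AT-critical. -/
def ATCritical (G : SimpleGraph V) (k : ℕ) : Prop :=
  AT G = k ∧ ∀ H : SimpleGraph V, H < G → AT H < k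

/-- The average degree `2‖G‖/|G|` of `G`. -/
noncomputable def avgDeg (G : SimpleGraph V) : ℝ :=
  2 * (Nat.card G.edgeSet : ℝ) / (Nat.card V : ℝ)

/-- `G` is (isomorphic to) the complete graph `K_k`. -/
def IsCompleteK (G : SimpleGraph V) (k : ℕ) : Prop :=
  Nonempty (G ≃g (⊤ : SimpleGraph (Fin k)))

/-- The induced subgraph of `G` on `B` has no cut vertex. -/
def NoCutVtx (G : SimpleGraph V) (B : Set V) : Prop :=
  ∀ v ∈ B, (G.induce (B \ {v})).Preconnected

/-- `B` is (the vertex set of) a block of `G`: a maximal connected subgraph without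
a cut vertex. -/
def IsBlockSet (G : SimpleGraph V) (B : Set V) : Prop :=
  (G.induce B).Connected ∧ NoCutVtx G B ∧
    ∀ C : Set V, B ⊆ C → (G.induce C).Connected → NoCutVtx G C → C = B

/-- The induced subgraph of `G` on `B` is an odd cycle (connected, 2-regular,
odd order at least 3). -/
def IsOddCycleSet (G : SimpleGraph V) (B : Set V) : Prop :=
  (G.induce B).Connected ∧ Odd (Nat.card B) ∧ 3 ≤ Nat.card B ∧
    ∀ v ∈ B, Nat.card {u : V | u ∈ B ∧ G.Adj v u} = 2

/-- `G` is a Gallai tree: connected, and every block is a complete graph or an odd cycle. -/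
def IsGallaiTree (G : SimpleGraph V) : Prop :=
  G.Connected ∧ ∀ B : Set V, IsBlockSet G B → G.IsClique B ∨ IsOddCycleSet G B

/-- `G ∈ 𝒯_k`: `G` is a Gallai tree with maximum degree at most `k-1`, and `G ≠ K_k`. -/
def MemTk (G : SimpleGraph V) (k : ℕ) : Prop :=
  IsGallaiTree G ∧ (∀ v : V, Nat.card (G.neighborSet v) ≤ k - 1) ∧ ¬ IsCompleteK G k

/-- `G` contains a copy of `K_n`. -/
def HasClique (G : SimpleGraph V) (n : ℕ) : Prop := ∃ S : Finset V, G.IsNClique n S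

/-- `W^k(G)`: the set of vertices of `G` contained in some copy of `K_{k-1}`. -/
def Wk (G : SimpleGraph V) (k : ℕ) : Set V :=
  {v | ∃ S : Finset V, G.IsNClique (k - 1) S ∧ v ∈ S}

/-- `q(G)`: the number of non-cut vertices of `G` lying in some copy of `K_{k-1}`. -/
noncomputable def qT (G : SimpleGraph V) (k : ℕ) : ℕ :=
  Nat.card {v : V | v ∈ Wk G k ∧ (G.induce {v}ᶜ).Preconnected}

/-- The vertices of `S` lying in `W^k` of the induced subgraph of `G` on `S`. -/
def WkIn (G : SimpleGraph V) (k : ℕ) (S : Set V) : Set V :=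
  {v | ∃ hv : v ∈ S, (⟨v, hv⟩ : S) ∈ Wk (G.induce S) k}

/-- `S` is (the vertex set of) a connected component of the induced subgraph of `G` on `X`. -/
def IsComponentOf (G : SimpleGraph V) (X S : Set V) : Prop :=
  S ⊆ X ∧ (G.induce S).Connected ∧ ∀ u ∈ S, ∀ v ∈ X, G.Adj u v → v ∈ S

/-- `G` is `f`-choosable. -/
def Choosable (G : SimpleGraph V) (f : V → ℕ) : Prop :=
  ∀ L : V → Finset ℕ, (∀ v, (L v).card = f v) →
    ∃ φ : V → ℕ, (∀ v, φ v ∈ L v) ∧ ∀ ⦃u v : V⦄, G.Adj u v → φ u ≠ φ v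

/-- `G` is `k`-list-critical: `G` is not `(k-1)`-choosable, but every proper subgraph is. -/
def ListCritical (G : SimpleGraph V) (k : ℕ) : Prop :=
  ¬ Choosable G (fun _ => k - 1) ∧ ∀ H : SimpleGraph V, H < G → Choosable H (fun _ => k - 1)

end ATPaper

/-!
The graph polynomial `∏_{(u,v) ∈ A} (X_u - X_v)` of an orientation `A` is homogeneous of degree
`|A|`. Expanding the product by choosing, for each arc, either its tail or its head, the
monomial `∏ X_v ^ d⁺(v)` arises exactly from the sets `B ⊆ A` of arcs where the head was chosen
that are eulerian, each with sign `(-1)^|B|`; so its coefficient is `EE(A) - EO(A)`. If this is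
nonzero and every list has more than `d⁺(v)` colors, the Combinatorial Nullstellensatz gives a
choice of colors from the lists at which the graph polynomial does not vanish, i.e. a proper
coloring.
-/

open MvPolynomial Finsupp Finset

namespace ATPaper

variable {V : Type*}

noncomputable def outDegVec (A : Finset (V × V)) : V →₀ ℕ := ∑ a ∈ A, single a.1 1

noncomputable def inDegVec (A : Finset (V × V)) : V →₀ ℕ := ∑ a ∈ A, single a.2 1

lemma sum_single_one_apply {ι : Type*} (s : Finset ι) (g : ι → V) (v : V) :
    (∑ a ∈ s, single (g a) (1 : ℕ)) v = #{a ∈ s | g a = v} := by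
  rw [card_filter, finsetSum_apply]
  exact sum_congr rfl fun a _ => single_apply

lemma outDegVec_apply (A : Finset (V × V)) (v : V) : outDegVec A v = outDeg A v :=
  sum_single_one_apply A Prod.fst v

lemma inDegVec_apply (A : Finset (V × V)) (v : V) : inDegVec A v = inDeg A v :=
  sum_single_one_apply A Prod.snd v

lemma degree_outDegVec (A : Finset (V × V)) : (outDegVec A).degree = #A := by
  simp [outDegVec, degree_single]

lemma inDegVec_add_outDegVec_sdiff_eq_iff {A B : Finset (V × V)} (hB : B ⊆ A) :
    inDegVec B + outDegVec (A \ B) = outDegVec A ↔ ∀ v, outDeg B v = inDeg B v := by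
  rw [← show outDegVec (A \ B) + outDegVec B = outDegVec A from sum_sdiff hB,
    add_comm (outDegVec (A \ B)), add_left_inj, Finsupp.ext_iff]
  simp only [outDegVec_apply, inDegVec_apply, eq_comm]

variable {R : Type*} [CommRing R]

noncomputable def graphPoly (A : Finset (V × V)) : MvPolynomial V R :=
  ∏ a ∈ A, (X a.1 - X a.2)

lemma eval_graphPoly (A : Finset (V × V)) (x : V → R) :
    eval x (graphPoly A) = ∏ a ∈ A, (x a.1 - x a.2) := by
  simp [graphPoly]

lemma isHomogeneous_graphPoly (A : Finset (V × V)) :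
    (graphPoly A : MvPolynomial V R).IsHomogeneous #A := by
  simpa [graphPoly] using IsHomogeneous.prod A _ (fun _ => 1)
    fun a _ => (isHomogeneous_X R a.1).sub (isHomogeneous_X R a.2)

lemma prod_X_eq_monomial {ι : Type*} (s : Finset ι) (g : ι → V) :
    ∏ a ∈ s, (X (g a) : MvPolynomial V R) = monomial (∑ a ∈ s, single (g a) 1) 1 := by
  rw [monomial_sum_one]
  rfl

lemma graphPoly_eq_sum_powerset (A : Finset (V × V)) :
    (graphPoly A : MvPolynomial V R) =
      ∑ B ∈ A.powerset, monomial (inDegVec B + outDegVec (A \ B)) ((-1) ^ #B) := by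
  simp_rw [graphPoly, sub_eq_neg_add, prod_add]
  refine sum_congr rfl fun B _ => ?_
  rw [prod_neg, prod_X_eq_monomial, prod_X_eq_monomial, ← C_1, ← C_neg, ← C_pow,
    C_mul_monomial, mul_one, monomial_mul, mul_one, inDegVec, outDegVec]

lemma coeff_outDegVec_graphPoly (A : Finset (V × V)) :
    coeff (outDegVec A) (graphPoly A : MvPolynomial V R) = EE A - EO A := by
  rw [graphPoly_eq_sum_powerset, coeff_sum]
  simp_rw [coeff_monomial]
  calc ∑ B ∈ A.powerset,
        (if inDegVec B + outDegVec (A \ B) = outDegVec A then (-1 : R) ^ #B else 0)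
      = ∑ B ∈ A.powerset with ∀ v, outDeg B v = inDeg B v, (-1 : R) ^ #B := by
        rw [sum_filter]
        exact sum_congr rfl fun B hB => by
          simp only [inDegVec_add_outDegVec_sdiff_eq_iff (mem_powerset.1 hB)]
    _ = EE A - EO A := by
        rw [← Finset.sum_filter_add_sum_filter_not _ fun B => Even #B,
          sum_congr rfl fun B hB => (mem_filter.1 hB).2.neg_one_pow,
          sum_congr rfl fun B hB => (Nat.not_even_iff_odd.1 (mem_filter.1 hB).2).neg_one_pow,
          sum_const, sum_const, filter_filter, filter_filter, EE, EO]
        simp [sub_eq_add_neg]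

lemma exists_eval_graphPoly_ne_zero [IsDomain R] [CharZero R] [Finite V]
    {A : Finset (V × V)} (hA : EE A ≠ EO A) (S : V → Finset R)
    (hS : ∀ v, outDeg A v < #(S v)) :
    ∃ x : V → R, (∀ v, x v ∈ S v) ∧ eval x (graphPoly A) ≠ 0 := by
  have hcoeff : coeff (outDegVec A) (graphPoly A : MvPolynomial V R) ≠ 0 := by
    rw [coeff_outDegVec_graphPoly, sub_ne_zero]
    exact_mod_cast hA
  have hdeg : (graphPoly A : MvPolynomial V R).totalDegree = (outDegVec A).degree := by
    rw [degree_outDegVec]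
    exact (isHomogeneous_graphPoly A).totalDegree fun h => hcoeff (by rw [h, coeff_zero])
  exact combinatorial_nullstellensatz_exists_eval_nonzero _ _ hcoeff hdeg S
    fun v => by simpa [outDegVec_apply] using hS v

lemma IsOrientation.ne_of_eval_graphPoly_ne_zero {G : SimpleGraph V} {A : Finset (V × V)}
    (hA : IsOrientation G A) {x : V → R} (hx : eval x (graphPoly A) ≠ 0) {u v : V}
    (huv : G.Adj u v) : x u ≠ x v := by
  rw [eval_graphPoly] at hx
  intro hxuv
  rcases (hA.1 u v).1 huv with h | h
  · exact hx (prod_eq_zero h (sub_eq_zero.2 hxuv))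
  · exact hx (prod_eq_zero h (sub_eq_zero.2 hxuv.symm))

end ATPaper

/-- Alon–Tarsi / Schauz: if `G` is `f`-AT, then `G` is `f`-choosable. -/
theorem stmt_0 {V : Type*} [Fintype V] (G : SimpleGraph V) (f : V → ℕ)
    (hAT : ATPaper.IsfAT G f) : ATPaper.Choosable G f := by
  obtain ⟨A, hA, hEE, hout⟩ := hAT
  intro L hL
  obtain ⟨x, hxL, hx⟩ := ATPaper.exists_eval_graphPoly_ne_zero (R := ℤ) hEE
    (fun v => (L v).map Nat.castEmbedding) fun v => by simpa [hL] using hout v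
  choose φ hφL hφx using fun v => mem_map.1 (hxL v)
  refine ⟨φ, hφL, fun u v huv hφ => hA.ne_of_eval_graphPoly_ne_zero hx huv ?_⟩
  rw [← hφx u, ← hφx v, hφ]
end

section
/- For every integer k ≥ 4 and every Gallai tree T with maximum degree at most k−1 and T ≠ K_k, the average degree of T satisfies d(T) < k − 2 + 2/(k−1). -/
open scoped Classical

/-!
Write `K = k - 1`. By induction on `|T|` we show `K (Σ deg + 2) ≤ (K (K - 1) + 2) |T|`,
which is the claim because `(K (K - 1) + 2) / K = k - 2 + 2 / (k - 1)`. A complete `T` has at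
most `K` vertices and is checked directly. Otherwise pick a vertex `v` and a component `S` of
`T - v` with `|S|` minimal: then `S ∪ {v}` is an end block, hence a clique or an odd cycle, and
`T - S` is again a Gallai tree in the class. Deleting `S` lowers the degree sum by
`Σ_{x ∈ S} deg x + |N(v) ∩ S|`, which the budget `(K (K - 1) + 2) |S|` covers, except when the
block is `K_K`. Then `v` has exactly one neighbour `u` outside the block, and deleting the whole
block, a component of `T - u`, fits the budget exactly.
-/

namespace ATPaper

open SimpleGraph

variable {V : Type*} {T : SimpleGraph V}

lemma mul_sq_add_le {K s : ℕ} (h : s + 2 ≤ K) : K * (s * s + s) ≤ (K * (K - 1) + 2) * s := by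
  have h1 : K * (s * s + s) ≤ K * (K - 1) * s := by
    rw [show s * s + s = (s + 1) * s by ring, ← mul_assoc]
    exact Nat.mul_le_mul_right s (Nat.mul_le_mul_left K (by omega))
  nlinarith

lemma mul_two_mul_add_two_le {K s : ℕ} (hK : 3 ≤ K) (hs : 4 ≤ s) :
    K * (2 * s + 2) ≤ (K * (K - 1) + 2) * s := by
  obtain ⟨a, rfl⟩ : ∃ a, K = a + 3 := ⟨K - 3, by omega⟩
  obtain ⟨b, rfl⟩ : ∃ b, s = b + 4 := ⟨s - 4, by omega⟩
  rw [show a + 3 - 1 = a + 2 by omega]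
  ring_nf
  omega

lemma mul_mul_pred_add_two_le {K n : ℕ} (hn : 1 ≤ n) (hnK : n ≤ K) :
    K * (n * (n - 1) + 2) ≤ (K * (K - 1) + 2) * n := by
  obtain ⟨m, rfl⟩ : ∃ m, n = m + 1 := ⟨n - 1, by omega⟩
  obtain ⟨l, rfl⟩ : ∃ l, K = m + 1 + l := ⟨K - m - 1, by omega⟩
  rw [Nat.add_sub_cancel, show m + 1 + l - 1 = m + l by omega]
  rcases l with _ | l
  · ring_nf; omega
  · ring_nf; nlinarith

section Induce

variable {A : Set V}

lemma exists_walk_of_reachable_induce {x y : A} (h : (T.induce A).Reachable x y) :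
    ∃ p : T.Walk x y, ∀ z ∈ p.support, z ∈ A := by
  obtain ⟨p⟩ := h
  refine ⟨p.map (⟨Subtype.val, id⟩ : T.induce A →g T), fun z hz => ?_⟩
  rw [Walk.support_map, List.mem_map] at hz
  obtain ⟨z', -, rfl⟩ := hz
  exact z'.2

lemma reachable_induce_of_walk_to {y v : V} (p : T.Walk y v) (hy : y ∈ A) (hv : v ∈ A)
    (hA : ∀ x ∈ A, x ≠ v → ∀ b ∈ p.support, T.Adj x b → b ∈ A) :
    (T.induce A).Reachable ⟨y, hy⟩ ⟨v, hv⟩ := by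
  induction p with
  | nil => rfl
  | @cons y b v hyb p ih =>
    by_cases hyv : y = v
    · subst hyv; rfl
    have hb : b ∈ A := hA y hy hyv b (by simp) hyb
    exact (show (T.induce A).Adj ⟨y, hy⟩ ⟨b, hb⟩ from hyb).reachable.trans
      (ih hb hv fun x hx hxv c hc => hA x hx hxv c (by simp [hc]))

variable (T A) in
noncomputable def induceInduceIso (B : Set A) :
    (T.induce A).induce B ≃g T.induce (Subtype.val '' B) where
  toEquiv := Equiv.Set.image Subtype.val B Subtype.val_injective
  map_rel_iff' := Iff.rfl

lemma connected_induce_induce_iff {B : Set A} :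
    ((T.induce A).induce B).Connected ↔ (T.induce (Subtype.val '' B)).Connected :=
  (induceInduceIso T A B).connected_iff

lemma noCutVtx_induce_iff {B : Set A} :
    NoCutVtx (T.induce A) B ↔ NoCutVtx T (Subtype.val '' B) := by
  simp only [NoCutVtx, Set.forall_mem_image]
  refine forall₂_congr fun x _ => ?_
  rw [(induceInduceIso T A _).preconnected_iff, Set.image_sdiff Subtype.val_injective,
    Set.image_singleton]

lemma isOddCycleSet_induce_of_image {B : Set A} (h : IsOddCycleSet T (Subtype.val '' B)) :
    IsOddCycleSet (T.induce A) B := by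
  obtain ⟨hconn, hodd, h3, hdeg⟩ := h
  have hcard : Nat.card (Subtype.val '' B) = Nat.card B :=
    Nat.card_image_of_injective Subtype.val_injective B
  refine ⟨connected_induce_induce_iff.mpr hconn, hcard ▸ hodd, hcard ▸ h3, fun x hx => ?_⟩
  have himage : Subtype.val '' {u : A | u ∈ B ∧ (T.induce A).Adj x u} =
      {u : V | u ∈ Subtype.val '' B ∧ T.Adj x u} := by
    ext u
    constructor
    · rintro ⟨u, ⟨huB, hxu⟩, rfl⟩
      exact ⟨⟨u, huB, rfl⟩, hxu⟩
    · rintro ⟨⟨u, huB, rfl⟩, hxu⟩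
      exact ⟨u, ⟨huB, hxu⟩, rfl⟩
  rw [← hdeg x ⟨x, hx, rfl⟩, ← himage, Nat.card_image_of_injective Subtype.val_injective]

lemma isBlockSet_image_of_induce {B : Set A} (hB : IsBlockSet (T.induce A) B)
    (hA : ∀ C, Subtype.val '' B ⊆ C → (T.induce C).Connected → NoCutVtx T C → C ⊆ A) :
    IsBlockSet T (Subtype.val '' B) := by
  obtain ⟨hconn, hcut, hmax⟩ := hB
  refine ⟨connected_induce_induce_iff.mp hconn, noCutVtx_induce_iff.mp hcut,
    fun C hBC hCconn hCcut => ?_⟩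
  have hC : Subtype.val '' (Subtype.val ⁻¹' C : Set A) = C := by
    rw [Subtype.image_preimage_coe, Set.inter_eq_right.mpr (hA C hBC hCconn hCcut)]
  rw [← hC] at hBC hCconn hCcut ⊢
  rw [hmax _ (Set.image_subset_image_iff Subtype.val_injective |>.mp hBC)
    (connected_induce_induce_iff.mpr hCconn) (noCutVtx_induce_iff.mpr hCcut)]

lemma ncard_neighborSet_induce (x : A) :
    Nat.card ((T.induce A).neighborSet x) = (T.neighborSet x ∩ A).ncard := by
  rw [neighborSet_induce, Nat.card_coe_set_eq,
    ← Set.ncard_image_of_injective _ Subtype.val_injective, Subtype.image_preimage_coe,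
    Set.inter_comm]

lemma ncard_neighborSet_induce_le [Finite V] (x : A) :
    Nat.card ((T.induce A).neighborSet x) ≤ Nat.card (T.neighborSet x) := by
  rw [ncard_neighborSet_induce, Nat.card_coe_set_eq]
  exact Set.ncard_le_ncard Set.inter_subset_left

lemma ncard_neighborSet_induce_lt [Finite V] {x : A} {s : V} (hs : s ∉ A) (hxs : T.Adj x s) :
    Nat.card ((T.induce A).neighborSet x) < Nat.card (T.neighborSet x) := by
  rw [ncard_neighborSet_induce, Nat.card_coe_set_eq]
  exact Set.ncard_lt_ncard ⟨Set.inter_subset_left, fun h => hs (h hxs).2⟩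

lemma ncard_neighborSet_top (k : ℕ) (w : Fin k) :
    Nat.card ((⊤ : SimpleGraph (Fin k)).neighborSet w) = k - 1 := by
  rw [neighborSet_top, Nat.card_coe_set_eq, Set.ncard_compl, Set.ncard_singleton, Nat.card_fin]

end Induce

lemma neighborSet_inter_eq_of_isClique {B : Set V} (hB : T.IsClique B) {x : V} (hx : x ∈ B) :
    T.neighborSet x ∩ B = B \ {x} := by
  ext y
  exact ⟨fun ⟨hxy, hy⟩ => ⟨hy, hxy.ne'⟩, fun ⟨hy, hyx⟩ => ⟨hB hx hy (Ne.symm hyx), hy⟩⟩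

lemma IsOddCycleSet.ncard_neighborSet_inter {B : Set V} (hB : IsOddCycleSet T B) {x : V}
    (hx : x ∈ B) : (T.neighborSet x ∩ B).ncard = 2 := by
  rw [← hB.2.2.2 x hx, Nat.card_coe_set_eq, Set.inter_comm]
  rfl

lemma IsOddCycleSet.isClique_of_ncard_eq_three {B : Set V} (hB : IsOddCycleSet T B)
    (h3 : B.ncard = 3) : T.IsClique B := by
  intro x hx y hy hxy
  have hfin : B.Finite := Set.finite_of_ncard_ne_zero (by omega)
  have hN : T.neighborSet x ∩ B = B \ {x} :=
    Set.eq_of_subset_of_ncard_le (fun z ⟨hxz, hz⟩ => ⟨hz, hxz.ne'⟩)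
      (by rw [Set.ncard_sdiff_singleton_of_mem hx, h3, hB.ncard_neighborSet_inter hx])
      (hfin.subset Set.sdiff_subset)
  exact (hN.symm.subset ⟨hy, Ne.symm hxy⟩).1

/-- `S` is a component of `T - v` adjacent to `v` (a branch of `T` at `v`). -/
structure IsBranch (T : SimpleGraph V) (v : V) (S : Set V) : Prop where
  notMem : v ∉ S
  connected : (T.induce S).Connected
  adj_mem : ∀ x ∈ S, ∀ y, T.Adj x y → y = v ∨ y ∈ S
  exists_adj : ∃ s ∈ S, T.Adj v s

section Branch

variable {v : V} {S : Set V}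

lemma IsBranch.nonempty (hP : IsBranch T v S) : S.Nonempty :=
  let ⟨s, hs, _⟩ := hP.exists_adj; ⟨s, hs⟩

lemma IsBranch.ne_of_mem (hP : IsBranch T v S) {x : V} (hx : x ∈ S) : x ≠ v :=
  fun h => hP.notMem (h ▸ hx)

lemma IsBranch.neighborSet_subset (hP : IsBranch T v S) {x : V} (hx : x ∈ S) :
    T.neighborSet x ⊆ insert v S :=
  hP.adj_mem x hx

lemma IsBranch.neighborSet_inter_eq_empty (hP : IsBranch T v S) {x : V} (hx : x ∉ S)
    (hxv : x ≠ v) : T.neighborSet x ∩ S = ∅ :=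
  Set.eq_empty_of_forall_notMem fun y ⟨hxy, hy⟩ =>
    (hP.adj_mem y hy x hxy.symm).elim hxv hx

lemma IsBranch.mem_of_walk (hP : IsBranch T v S) {x y : V} (p : T.Walk x y) (hx : x ∈ S)
    (hv : v ∉ p.support) : y ∈ S := by
  by_contra hy
  obtain ⟨d, hd, hdS, hdS'⟩ := p.exists_boundary_dart S hx hy
  rcases hP.adj_mem _ hdS _ d.adj with h | h
  · exact hv (h ▸ p.dart_snd_mem_support_of_mem_darts hd)
  · exact hdS' h

lemma IsBranch.connected_induce_compl (hT : T.Connected) (hP : IsBranch T v S) :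
    (T.induce Sᶜ).Connected := by
  refine (connected_iff_exists_forall_reachable _).mpr ⟨⟨v, hP.notMem⟩, fun y => ?_⟩
  refine (reachable_induce_of_walk_to (hT y v).some y.2 hP.notMem ?_).symm
  exact fun x hx hxv b _ hxb hbS => (hP.adj_mem b hbS x hxb.symm).elim hxv hx

lemma IsBranch.connected_induce_insert (hP : IsBranch T v S) :
    (T.induce (insert v S)).Connected := by
  obtain ⟨s, hs, hvs⟩ := hP.exists_adj
  rw [← Set.singleton_union]
  exact connected_induce_union Preconnected.of_subsingleton hP.connected.preconnected
    (Set.mem_singleton v) hs hvs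

lemma IsBranch.subset_compl_of_noCutVtx (hP : IsBranch T v S) {C : Set V}
    (hC : (T.induce C).Connected) (hCcut : NoCutVtx T C) {b : V} (hbC : b ∈ C) (hbS : b ∉ S)
    (hbv : b ≠ v) : C ⊆ Sᶜ := by
  intro x hxC hxS
  have hCv : (T.induce (C \ {v})).Preconnected := by
    by_cases hvC : v ∈ C
    · exact hCcut v hvC
    · rw [Set.sdiff_singleton_eq_self hvC]
      exact hC.preconnected
  obtain ⟨p, hp⟩ := exists_walk_of_reachable_induce
    (hCv ⟨x, hxC, hP.ne_of_mem hxS⟩ ⟨b, hbC, hbv⟩)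
  exact hbS (hP.mem_of_walk p hxS fun hv => (hp v hv).2 rfl)

variable (T) in
def branchAt (w c : V) : Set V := {z | ∃ p : T.Walk c z, w ∉ p.support}

lemma isBranch_branchAt (hT : T.Connected) {w c : V} (hcw : c ≠ w) :
    IsBranch T w (branchAt T w c) := by
  have hc : c ∈ branchAt T w c := ⟨.nil, by simpa using hcw.symm⟩
  have hw : w ∉ branchAt T w c := fun ⟨p, hp⟩ => hp p.end_mem_support
  have adj_mem : ∀ x ∈ branchAt T w c, ∀ y, T.Adj x y → y = w ∨ y ∈ branchAt T w c := by
    rintro x ⟨p, hp⟩ y hxy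
    refine or_iff_not_imp_left.mpr fun hyw => ⟨p.concat hxy, ?_⟩
    simp [Walk.support_concat, hp, Ne.symm hyw]
  refine ⟨hw, (connected_iff_exists_forall_reachable _).mpr ⟨⟨c, hc⟩, ?_⟩, adj_mem, ?_⟩
  · rintro ⟨z, p, hp⟩
    exact (p.induce (branchAt T w c) fun x hx => ⟨p.takeUntil x hx,
      fun h => hp (p.support_takeUntil_subset_support hx h)⟩).reachable
  · obtain ⟨d, -, hdS, hdS'⟩ := (hT c w).some.exists_boundary_dart _ hc hw
    rcases adj_mem _ hdS _ d.adj with h | h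
    · exact ⟨d.fst, hdS, h ▸ d.adj.symm⟩
    · exact absurd h hdS'

lemma exists_isBranch_minimal [Finite V] [Nontrivial V] (hT : T.Connected) :
    ∃ v S, IsBranch T v S ∧ ∀ w S', IsBranch T w S' → S.ncard ≤ S'.ncard := by
  obtain ⟨c, w, hcw⟩ := exists_pair_ne V
  obtain ⟨⟨v, S⟩, hP, hmin⟩ := (measure fun p : V × Set V => p.2.ncard).wf.has_min
    {p | IsBranch T p.1 p.2} ⟨(w, branchAt T w c), isBranch_branchAt hT hcw⟩
  exact ⟨v, S, hP, fun w S' hP' => not_lt.mp (hmin (w, S') hP')⟩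

lemma IsBranch.noCutVtx_insert_of_minimal [Finite V] (hT : T.Connected) (hP : IsBranch T v S)
    (hmin : ∀ w S', IsBranch T w S' → S.ncard ≤ S'.ncard) : NoCutVtx T (insert v S) := by
  rintro w (rfl | hwS)
  · rw [Set.insert_sdiff_self_of_notMem hP.notMem]
    exact hP.connected.preconnected
  have hv : v ∈ insert v S \ {w} := ⟨Set.mem_insert v S, (hP.ne_of_mem hwS).symm⟩
  suffices h : ∀ y (hy : y ∈ insert v S \ {w}),
      (T.induce (insert v S \ {w})).Reachable ⟨y, hy⟩ ⟨v, hv⟩ from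
    fun a b => (h a a.2).trans (h b b.2).symm
  intro y hy
  by_cases hvy : v ∈ branchAt T w y
  · obtain ⟨p, hp⟩ := hvy
    refine reachable_induce_of_walk_to p hy hv fun x hx hxv b hb hxb => ?_
    rcases hP.adj_mem x (hx.1.resolve_left hxv) b hxb with rfl | hbS
    · exact hv
    · exact ⟨Set.mem_insert_of_mem v hbS, fun h => hp (h ▸ hb)⟩
  -- otherwise the branch at `w` containing `y` would be smaller than `S`
  have hyS : y ∈ S := hy.1.resolve_left fun h => hvy (h ▸ ⟨.nil, by simpa [eq_comm] using hy.2⟩)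
  have hsub : branchAt T w y ⊆ S \ {w} := by
    rintro z ⟨p, hp⟩
    have hvp : v ∉ p.support := fun hv =>
      hvy ⟨p.takeUntil v hv, fun h => hp (p.support_takeUntil_subset_support hv h)⟩
    exact ⟨hP.mem_of_walk p hyS hvp, fun h => hp (h ▸ p.end_mem_support)⟩
  have h1 := hmin w _ (isBranch_branchAt hT hy.2)
  have h2 := Set.ncard_le_ncard hsub
  have h3 := Set.ncard_sdiff_singleton_lt_of_mem hwS
  omega

lemma IsBranch.isBlockSet_insert_of_minimal [Finite V] (hT : T.Connected)
    (hP : IsBranch T v S) (hmin : ∀ w S', IsBranch T w S' → S.ncard ≤ S'.ncard) :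
    IsBlockSet T (insert v S) := by
  refine ⟨hP.connected_induce_insert, hP.noCutVtx_insert_of_minimal hT hmin,
    fun C hBC _ hCcut => Set.Subset.antisymm (fun z hz => ?_) hBC⟩
  by_cases hzv : z = v
  · exact hzv ▸ Set.mem_insert v S
  obtain ⟨s, hs⟩ := hP.nonempty
  obtain ⟨p, hp⟩ := exists_walk_of_reachable_induce (hCcut v (hBC (Set.mem_insert v S))
    ⟨s, hBC (Set.mem_insert_of_mem v hs), hP.ne_of_mem hs⟩ ⟨z, hz, hzv⟩)
  exact Set.mem_insert_of_mem v (hP.mem_of_walk p hs fun hv => (hp v hv).2 rfl)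

lemma IsBranch.exists_adj_notMem (hT : T.Connected) (hP : IsBranch T v S)
    (hB : insert v S ≠ Set.univ) : ∃ u ∉ insert v S, T.Adj v u := by
  obtain ⟨w, hw⟩ := (Set.ne_univ_iff_exists_notMem _).mp hB
  obtain ⟨d, -, hd, hd'⟩ := (hT v w).some.exists_boundary_dart _ (Set.mem_insert v S) hw
  rcases hd with h | h
  · exact ⟨d.snd, hd', h ▸ d.adj⟩
  · exact absurd (hP.neighborSet_subset h d.adj) hd'

lemma IsBranch.isBranch_insert (hP : IsBranch T v S) {u : V} (hu : u ∉ insert v S) (hvu : T.Adj v u)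
    (hN : T.neighborSet v ⊆ insert u (insert v S)) : IsBranch T u (insert v S) where
  notMem := hu
  connected := hP.connected_induce_insert
  adj_mem := by
    rintro x (rfl | hx) y hxy
    · exact hN hxy
    · exact Or.inr (hP.neighborSet_subset hx hxy)
  exists_adj := ⟨v, Set.mem_insert v S, hvu.symm⟩

lemma IsBranch.isGallaiTree_induce_compl (hP : IsBranch T v S) (hT : IsGallaiTree T) :
    IsGallaiTree (T.induce Sᶜ) := by
  refine ⟨hP.connected_induce_compl hT.1, fun B hB => ?_⟩
  by_cases hBv : B ⊆ {⟨v, hP.notMem⟩}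
  · exact Or.inl (IsClique.of_subsingleton (Set.subsingleton_singleton.anti hBv))
  obtain ⟨b, hbB, hbv⟩ := Set.not_subset.mp hBv
  have hblock := isBlockSet_image_of_induce hB fun C hBC hC hCcut =>
    hP.subset_compl_of_noCutVtx hC hCcut (hBC ⟨b, hbB, rfl⟩) b.2 fun h => hbv (Subtype.ext h)
  exact (hT.2 _ hblock).imp isClique_induce_iff.mpr isOddCycleSet_induce_of_image

lemma IsBranch.not_isCompleteK_induce_compl [Finite V] (hP : IsBranch T v S) {k : ℕ}
    (hdeg : ∀ x, Nat.card (T.neighborSet x) ≤ k - 1) :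
    ¬ IsCompleteK (T.induce Sᶜ) k := by
  rintro ⟨φ⟩
  obtain ⟨s, hs, hvs⟩ := hP.exists_adj
  have h := ncard_neighborSet_induce_lt (A := Sᶜ) (x := ⟨v, hP.notMem⟩) (not_not_intro hs) hvs
  rw [Nat.card_congr (φ.mapNeighborSet _), ncard_neighborSet_top] at h
  exact h.not_ge (hdeg v)

lemma IsBranch.memTk_induce_compl [Finite V] (hP : IsBranch T v S) {k : ℕ}
    (hT : MemTk T k) : MemTk (T.induce Sᶜ) k :=
  ⟨hP.isGallaiTree_induce_compl hT.1, fun x => (ncard_neighborSet_induce_le x).trans (hT.2.1 x),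
    hP.not_isCompleteK_induce_compl hT.2.1⟩

end Branch

section DegreeSum

variable [Fintype V] {v : V} {S : Set V}

variable (T) in
noncomputable def degSum : ℕ := ∑ x, (T.neighborSet x).ncard

variable (T) in
noncomputable def branchDegSum (v : V) (S : Set V) : ℕ :=
  ∑ x ∈ S.toFinset, (T.neighborSet x).ncard + (T.neighborSet v ∩ S).ncard

lemma two_mul_card_edgeSet : 2 * Nat.card T.edgeSet = degSum T := by
  rw [degSum, Nat.card_eq_fintype_card, ← edgeFinset_card, ← sum_degrees_eq_twice_card_edges]
  refine Finset.sum_congr rfl fun x _ => ?_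
  rw [← card_neighborSet_eq_degree, ← Nat.card_eq_fintype_card, Nat.card_coe_set_eq]

lemma IsBranch.degSum_eq (hP : IsBranch T v S) :
    degSum T = degSum (T.induce Sᶜ) + branchDegSum T v S := by
  have hcompl : ∑ x ∈ Sᶜ.toFinset, (T.neighborSet x).ncard =
      degSum (T.induce Sᶜ) + (T.neighborSet v ∩ S).ncard := by
    rw [← Finset.sum_set_coe, degSum]
    simp_rw [← Set.ncard_inter_add_ncard_sdiff_eq_ncard (T.neighborSet _) S]
    rw [Finset.sum_add_distrib, add_comm]
    congr 1
    · refine Finset.sum_congr rfl fun x _ => ?_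
      rw [Set.sdiff_eq, ← ncard_neighborSet_induce, Nat.card_coe_set_eq]
    · refine (Finset.sum_eq_single ⟨v, hP.notMem⟩ (fun x _ hxv => ?_) (by simp)).trans rfl
      rw [hP.neighborSet_inter_eq_empty x.2 (Subtype.coe_ne_coe.mpr hxv), Set.ncard_empty]
  rw [degSum, ← Finset.sum_compl_add_sum S.toFinset, ← Set.toFinset_compl, hcompl, branchDegSum]
  ring

lemma IsBranch.degSum_bound_of_compl (hP : IsBranch T v S) {K c : ℕ}
    (hrest : K * (degSum (T.induce Sᶜ) + 2) ≤ c * Nat.card ↥Sᶜ)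
    (hS : K * branchDegSum T v S ≤ c * S.ncard) :
    K * (degSum T + 2) ≤ c * Nat.card V := by
  rw [hP.degSum_eq, ← Set.ncard_add_ncard_compl S, ← Nat.card_coe_set_eq Sᶜ]
  linarith

lemma IsBranch.sum_ncard_neighborSet_of_isClique (hP : IsBranch T v S)
    (hB : T.IsClique (insert v S)) :
    ∑ x ∈ S.toFinset, (T.neighborSet x).ncard = S.ncard * S.ncard := by
  have hdeg : ∀ x ∈ S.toFinset, (T.neighborSet x).ncard = S.ncard := fun x hx => by
    have hx := Set.mem_toFinset.mp hx
    rw [← Set.inter_eq_left.mpr (hP.neighborSet_subset hx),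
      neighborSet_inter_eq_of_isClique hB (Set.mem_insert_of_mem v hx),
      Set.ncard_sdiff_singleton_of_mem (Set.mem_insert_of_mem v hx),
      Set.ncard_insert_of_notMem hP.notMem, Nat.add_sub_cancel]
  rw [Finset.sum_congr rfl hdeg, Finset.sum_const, smul_eq_mul, ← Set.ncard_eq_toFinset_card']

lemma IsBranch.branchDegSum_of_isClique (hP : IsBranch T v S) (hB : T.IsClique (insert v S)) :
    branchDegSum T v S = S.ncard * S.ncard + S.ncard := by
  have hv : T.neighborSet v ∩ S = S := Set.inter_eq_right.mpr fun x hx =>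
    hB (Set.mem_insert v S) (Set.mem_insert_of_mem v hx) (hP.ne_of_mem hx).symm
  rw [branchDegSum, hP.sum_ncard_neighborSet_of_isClique hB, hv]

lemma IsBranch.branchDegSum_of_isOddCycleSet (hP : IsBranch T v S)
    (hB : IsOddCycleSet T (insert v S)) : branchDegSum T v S = 2 * S.ncard + 2 := by
  have hdeg : ∀ x ∈ S.toFinset, (T.neighborSet x).ncard = 2 := fun x hx => by
    have hx := Set.mem_toFinset.mp hx
    rw [← Set.inter_eq_left.mpr (hP.neighborSet_subset hx),
      hB.ncard_neighborSet_inter (Set.mem_insert_of_mem v hx)]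
  have hv := hB.ncard_neighborSet_inter (Set.mem_insert v S)
  rw [Set.inter_insert_of_notMem (show v ∉ T.neighborSet v from T.irrefl)] at hv
  rw [branchDegSum, Finset.sum_congr rfl hdeg, Finset.sum_const, smul_eq_mul,
    ← Set.ncard_eq_toFinset_card', hv, mul_comm]

lemma IsBranch.branchDegSum_insert (hP : IsBranch T v S) {u : V} (hu : u ∉ insert v S)
    (hvu : T.Adj v u) :
    branchDegSum T u (insert v S) =
      (T.neighborSet v).ncard + ∑ x ∈ S.toFinset, (T.neighborSet x).ncard + 1 := by
  have hu' : T.neighborSet u ∩ insert v S = {v} := by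
    rw [Set.inter_insert_of_mem (show v ∈ T.neighborSet u from hvu.symm),
      hP.neighborSet_inter_eq_empty (fun h => hu (Set.mem_insert_of_mem v h))
        (fun h => hu (h ▸ Set.mem_insert v S))]
    exact insert_empty_eq v
  rw [branchDegSum, hu', Set.ncard_singleton,
    ← Finset.sum_insert (f := fun x => (T.neighborSet x).ncard) (by simpa using hP.notMem)]
  simp only [Set.toFinset_insert]

lemma IsBranch.exists_branchDegSum_le_of_isClique (hT : T.Connected) (hP : IsBranch T v S)
    (hB : T.IsClique (insert v S)) (hBV : insert v S ≠ Set.univ) {K : ℕ}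
    (hdeg : ∀ x, (T.neighborSet x).ncard ≤ K) :
    ∃ w S', IsBranch T w S' ∧ K * branchDegSum T w S' ≤ (K * (K - 1) + 2) * S'.ncard := by
  obtain ⟨u, hu, hvu⟩ := hP.exists_adj_notMem hT hBV
  have huS : u ∉ S := fun h => hu (Set.mem_insert_of_mem v h)
  have hsub : insert u S ⊆ T.neighborSet v := Set.insert_subset hvu fun x hx =>
    hB (Set.mem_insert v S) (Set.mem_insert_of_mem v hx) (hP.ne_of_mem hx).symm
  have hsK : S.ncard + 1 ≤ K := by
    simpa [Set.ncard_insert_of_notMem huS] using (Set.ncard_le_ncard hsub).trans (hdeg v)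
  obtain hsK | rfl : S.ncard + 2 ≤ K ∨ K = S.ncard + 1 := by omega
  · exact ⟨v, S, hP, hP.branchDegSum_of_isClique hB ▸ mul_sq_add_le hsK⟩
  -- a `K_K` block whose vertex `v` has the single outside neighbour `u`: enlarge the branch
  have hN : T.neighborSet v = insert u S := (Set.eq_of_subset_of_ncard_le hsub
    (by rw [Set.ncard_insert_of_notMem huS]; exact hdeg v)).symm
  refine ⟨u, insert v S,
    hP.isBranch_insert hu hvu (hN ▸ Set.insert_subset_insert (Set.subset_insert v S)), le_of_eq ?_⟩
  rw [hP.branchDegSum_insert hu hvu, hN, Set.ncard_insert_of_notMem huS,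
    hP.sum_ncard_neighborSet_of_isClique hB, Set.ncard_insert_of_notMem hP.notMem,
    Nat.add_sub_cancel]
  ring

lemma IsBranch.branchDegSum_le_of_isOddCycleSet (hP : IsBranch T v S)
    (hB : IsOddCycleSet T (insert v S)) (h3 : (insert v S).ncard ≠ 3) {K : ℕ} (hK : 3 ≤ K) :
    K * branchDegSum T v S ≤ (K * (K - 1) + 2) * S.ncard := by
  rw [hP.branchDegSum_of_isOddCycleSet hB]
  obtain ⟨-, ⟨m, hm⟩, hB3, -⟩ := hB
  rw [Nat.card_coe_set_eq, Set.ncard_insert_of_notMem hP.notMem] at hm hB3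
  rw [Set.ncard_insert_of_notMem hP.notMem] at h3
  exact mul_two_mul_add_two_le hK (by omega)

lemma degSum_bound_of_isClique_univ {K : ℕ} (hT : MemTk T (K + 1))
    (hB : T.IsClique Set.univ) : K * (degSum T + 2) ≤ (K * (K - 1) + 2) * Nat.card V := by
  obtain rfl := isClique_univ.mp hB
  have hdeg (x : V) : ((⊤ : SimpleGraph V).neighborSet x).ncard = Nat.card V - 1 := by
    rw [neighborSet_top, Set.ncard_compl, Set.ncard_singleton]
  obtain ⟨x⟩ := hT.1.1.nonempty
  have : Nonempty V := ⟨x⟩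
  have hn : 1 ≤ Nat.card V := Nat.card_pos
  have hnK : Nat.card V ≠ K + 1 := fun h =>
    hT.2.2 ⟨Iso.completeGraph (Finite.equivFinOfCardEq h)⟩
  have hxK := hT.2.1 x
  rw [Nat.card_coe_set_eq, hdeg] at hxK
  rw [degSum, Finset.sum_congr rfl fun x _ => hdeg x, Finset.sum_const, Finset.card_univ,
    smul_eq_mul, ← Nat.card_eq_fintype_card]
  exact mul_mul_pred_add_two_le hn (by omega)

lemma exists_isBranch_branchDegSum_le {K : ℕ} (hK : 3 ≤ K) (hT : MemTk T (K + 1))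
    (hT' : ¬ T.IsClique Set.univ) :
    ∃ w S, IsBranch T w S ∧ K * branchDegSum T w S ≤ (K * (K - 1) + 2) * S.ncard := by
  have hdeg (x : V) : (T.neighborSet x).ncard ≤ K := by
    simpa only [Nat.card_coe_set_eq, Nat.add_sub_cancel] using hT.2.1 x
  have : Nontrivial V := not_subsingleton_iff_nontrivial.mp fun _ =>
    hT' (IsClique.of_subsingleton Set.subsingleton_univ)
  obtain ⟨v, S, hP, hmin⟩ := exists_isBranch_minimal hT.1.1
  rcases hT.1.2 _ (hP.isBlockSet_insert_of_minimal hT.1.1 hmin) with hB | hB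
  · exact hP.exists_branchDegSum_le_of_isClique hT.1.1 hB (fun h => hT' (h ▸ hB)) hdeg
  by_cases h3 : (insert v S).ncard = 3
  · have hB := hB.isClique_of_ncard_eq_three h3
    exact hP.exists_branchDegSum_le_of_isClique hT.1.1 hB (fun h => hT' (h ▸ hB)) hdeg
  · exact ⟨v, S, hP, hP.branchDegSum_le_of_isOddCycleSet hB h3 hK⟩

theorem degSum_bound {K : ℕ} (hK : 3 ≤ K) (T : SimpleGraph V) (hT : MemTk T (K + 1)) :
    K * (degSum T + 2) ≤ (K * (K - 1) + 2) * Nat.card V := by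
  induction hn : Nat.card V using Nat.strong_induction_on generalizing V with
  | _ n ih =>
  subst hn
  by_cases hB : T.IsClique Set.univ
  · exact degSum_bound_of_isClique_univ hT hB
  obtain ⟨w, S, hP, hS⟩ := exists_isBranch_branchDegSum_le hK hT hB
  have hlt : Nat.card ↥Sᶜ < Nat.card V := by
    have := hP.nonempty.ncard_pos
    rw [Nat.card_coe_set_eq, ← Set.ncard_add_ncard_compl S]
    omega
  exact hP.degSum_bound_of_compl (ih _ hlt _ (hP.memTk_induce_compl hT) rfl) hS

end DegreeSum

end ATPaper

/-- for `k ≥ 4` and a Gallai tree `T` with maximum degree at most `k-1`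
and `T ≠ K_k`, the average degree satisfies `d(T) < k - 2 + 2/(k-1)`. -/
theorem stmt_2 {V : Type*} [Fintype V] (k : ℕ) (hk : 4 ≤ k) (T : SimpleGraph V)
    (hT : ATPaper.MemTk T k) :
    ATPaper.avgDeg T < (k : ℝ) - 2 + 2 / ((k : ℝ) - 1) := by
  obtain ⟨K, rfl⟩ : ∃ K, k = K + 1 := ⟨k - 1, by omega⟩
  have hbound : (K : ℝ) * (ATPaper.degSum T + 2) ≤ (K * (K - 1) + 2) * Nat.card V := by
    have h := ATPaper.degSum_bound (by omega) T hT
    rw [← Nat.cast_le (α := ℝ)] at h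
    push_cast [Nat.cast_sub (by omega : 1 ≤ K)] at h
    exact h
  have hE : (2 * Nat.card T.edgeSet : ℝ) = ATPaper.degSum T := by
    exact_mod_cast ATPaper.two_mul_card_edgeSet
  have : Nonempty V := hT.1.1.nonempty
  have hn : (0 : ℝ) < Nat.card V := by exact_mod_cast Nat.card_pos
  have hK : (0 : ℝ) < K := by exact_mod_cast (by omega : 0 < K)
  have hrhs : ((K + 1 : ℕ) : ℝ) - 2 + 2 / (((K + 1 : ℕ) : ℝ) - 1) = (K * (K - 1) + 2) / K := by
    push_cast
    field_simp [hK.ne']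
    ring
  rw [ATPaper.avgDeg, hE, hrhs, div_lt_div_iff₀ hn hK]
  linarith
end

section
/- For every integer k ≥ 5 and every T ∈ 𝒯_k, we have 2||T|| ≤ (k − 2 + 2/(k−1))·|T| − 2. -/
open scoped Classical

/-!
Write `c = k - 2 + 2 / (k - 1)`. By induction over cut vertices, for every connected set `S` of
vertices of `T` whose blocks are cliques or cycles, `2‖T[S]‖ ≤ c|S| - 2`, and even
`2‖T[S]‖ ≤ c|S| - c` if some vertex of `S` lies in no `K_{k-1}` of `T[S]`. For a single block
this is arithmetic: a clique of order `m ≤ k - 1` has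
`m(m - 1) = cm - 2 - (k - 1 - m)(m - 2/(k - 1))`, and cycles are sparse. Splitting `S` at a cut
vertex `x` into `S₁ ∪ S₂` with `S₁ ∩ S₂ = {x}` costs an extra `c` in the vertex count. As `x`
has degree at most `k - 1`, it lies in a `K_{k-1}` on at most one side, and the stronger bound
on the other side pays for that `c`. If `x` lies in a `K_{k-1}` of `S₂`, it is a pendant vertex
of `S₁`, and the induction is applied to `S₁ - x`.
-/
namespace GallaiTree

open Finset

variable {V : Type*} {G : SimpleGraph V}

def ReachIn (G : SimpleGraph V) (S : Set V) (u v : V) : Prop :=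
  ∃ w : G.Walk u v, ∀ z ∈ w.support, z ∈ S

namespace ReachIn

variable {S : Set V} {u v w : V}

lemma refl (hu : u ∈ S) : ReachIn G S u u :=
  ⟨.nil, by simp [hu]⟩

lemma symm (h : ReachIn G S u v) : ReachIn G S v u := by
  obtain ⟨p, hp⟩ := h
  exact ⟨p.reverse, by simpa using hp⟩

lemma trans (h : ReachIn G S u v) (h' : ReachIn G S v w) : ReachIn G S u w := by
  obtain ⟨p, hp⟩ := h
  obtain ⟨p', hp'⟩ := h'
  refine ⟨p.append p', fun z hz => ?_⟩
  rcases (SimpleGraph.Walk.mem_support_append_iff _ _).1 hz with h | h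
  exacts [hp _ h, hp' _ h]

lemma mem_right (h : ReachIn G S u v) : v ∈ S := by
  obtain ⟨p, hp⟩ := h
  exact hp _ p.end_mem_support

lemma of_adj (h : G.Adj u v) (hu : u ∈ S) (hv : v ∈ S) : ReachIn G S u v :=
  ⟨.cons h .nil, by simp [hu, hv]⟩

lemma mono {S' : Set V} (hSS' : S ⊆ S') (h : ReachIn G S u v) : ReachIn G S' u v := by
  obtain ⟨p, hp⟩ := h
  exact ⟨p, fun z hz => hSS' (hp z hz)⟩

lemma exists_adj (h : ReachIn G S u v) (hne : u ≠ v) : ∃ c ∈ S, G.Adj u c := by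
  obtain ⟨p, hp⟩ := h
  cases p with
  | nil => exact absurd rfl hne
  | cons hadj p => exact ⟨_, hp _ (by simp), hadj⟩

end ReachIn

lemma reachIn_of_walk_induce {S : Set V} {a b : S} (p : (G.induce S).Walk a b) :
    ReachIn G S a b := by
  induction p with
  | nil => exact ReachIn.refl (Subtype.prop _)
  | @cons a c b h p ih => exact (ReachIn.of_adj (G := G) h a.2 c.2).trans ih

lemma reachable_induce_of_reachIn {S : Set V} {u v : V} (h : ReachIn G S u v)
    (hu : u ∈ S) (hv : v ∈ S) : (G.induce S).Reachable ⟨u, hu⟩ ⟨v, hv⟩ := by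
  obtain ⟨p, hp⟩ := h
  induction p with
  | nil => rfl
  | @cons a c b h p ih =>
      have hc : c ∈ S := hp _ (by simp)
      have hadj : (G.induce S).Adj ⟨a, hu⟩ ⟨c, hc⟩ := h
      exact hadj.reachable.trans (ih hc hv fun z hz => hp _ (by simp [hz]))

lemma preconnected_induce_iff {S : Set V} :
    (G.induce S).Preconnected ↔ ∀ u ∈ S, ∀ v ∈ S, ReachIn G S u v :=
  ⟨fun h u hu v hv => reachIn_of_walk_induce (h ⟨u, hu⟩ ⟨v, hv⟩).some,
    fun h a b => reachable_induce_of_reachIn (h a a.2 b b.2) a.2 b.2⟩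

lemma connected_induce_iff {S : Set V} :
    (G.induce S).Connected ↔ S.Nonempty ∧ ∀ u ∈ S, ∀ v ∈ S, ReachIn G S u v := by
  rw [SimpleGraph.connected_iff, preconnected_induce_iff, Set.nonempty_coe_sort, and_comm]

section Components

def componentAvoiding (G : SimpleGraph V) (S : Set V) (x a : V) : Set V :=
  {v | ReachIn G (S \ {x}) a v}

variable {S : Set V} {x a : V}

lemma componentAvoiding_subset : componentAvoiding G S x a ⊆ S \ {x} :=
  fun _ h => h.mem_right

lemma componentAvoiding_subset_self : componentAvoiding G S x a ⊆ S :=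
  fun _ h => (componentAvoiding_subset h).1

lemma notMem_componentAvoiding : x ∉ componentAvoiding G S x a :=
  fun h => (componentAvoiding_subset h).2 rfl

lemma mem_componentAvoiding_self (ha : a ∈ S) (hax : a ≠ x) :
    a ∈ componentAvoiding G S x a :=
  ReachIn.refl ⟨ha, hax⟩

lemma mem_componentAvoiding_of_adj {u v : V} (hu : u ∈ componentAvoiding G S x a)
    (hv : v ∈ S) (hvx : v ≠ x) (huv : G.Adj u v) : v ∈ componentAvoiding G S x a :=
  ReachIn.trans hu (.of_adj huv (componentAvoiding_subset hu) ⟨hv, hvx⟩)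

lemma reachIn_componentAvoiding {v : V} (hv : v ∈ componentAvoiding G S x a) :
    ReachIn G (componentAvoiding G S x a) a v := by
  obtain ⟨p, hp⟩ := hv
  exact ⟨p, fun z hz =>
    ⟨p.takeUntil z hz, fun z' hz' => hp _ (p.support_takeUntil_subset_support hz hz')⟩⟩

lemma componentAvoiding_connected (ha : a ∈ S) (hax : a ≠ x) :
    (G.induce (componentAvoiding G S x a)).Connected :=
  connected_induce_iff.2 ⟨⟨a, mem_componentAvoiding_self ha hax⟩, fun _ hu _ hv =>
    (reachIn_componentAvoiding hu).symm.trans (reachIn_componentAvoiding hv)⟩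

lemma exists_adj_componentAvoiding (hS : (G.induce S).Connected) (ha : a ∈ S) (hax : a ≠ x)
    {b : V} (hb : b ∈ S) (hbA : b ∉ componentAvoiding G S x a) :
    ∃ y ∈ componentAvoiding G S x a, G.Adj x y := by
  obtain ⟨p, hp⟩ := (connected_induce_iff.1 hS).2 a ha b hb
  obtain ⟨d, hd, hdA, hdA'⟩ :=
    p.exists_boundary_dart _ (mem_componentAvoiding_self ha hax) hbA
  have hdx : d.snd = x := by
    by_contra hne
    exact hdA' (mem_componentAvoiding_of_adj hdA (hp _ (p.dart_snd_mem_support_of_mem_darts hd))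
      hne d.adj)
  exact ⟨d.fst, hdA, hdx ▸ d.adj.symm⟩

lemma insert_componentAvoiding_connected (ha : a ∈ S) (hax : a ≠ x) {y : V}
    (hy : y ∈ componentAvoiding G S x a) (hxy : G.Adj x y) :
    (G.induce (insert x (componentAvoiding G S x a))).Connected := by
  have hsub := Set.subset_insert x (componentAvoiding G S x a)
  have hto : ∀ v ∈ insert x (componentAvoiding G S x a),
      ReachIn G (insert x (componentAvoiding G S x a)) v a := by
    rintro v (rfl | hv)
    · exact (ReachIn.of_adj hxy (Or.inl rfl) (Or.inr hy)).trans
        ((reachIn_componentAvoiding hy).symm.mono hsub)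
    · exact (reachIn_componentAvoiding hv).symm.mono hsub
  exact connected_induce_iff.2 ⟨⟨a, Or.inr (mem_componentAvoiding_self ha hax)⟩,
    fun u hu v hv => (hto u hu).trans (hto v hv).symm⟩

/-- A walk from outside `A` into `A` must pass through `x`; its part before `x` avoids `A`. -/
lemma reachIn_diff_componentAvoiding {v w : V} (p : G.Walk v w)
    (hw : w ∈ componentAvoiding G S x a) (hp : ∀ z ∈ p.support, z ∈ S)
    (hv : v ∉ componentAvoiding G S x a) :
    ReachIn G (S \ componentAvoiding G S x a) v x := by
  induction p with
  | nil => exact absurd hw hv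
  | @cons u c _ huc p ih =>
      have huS : u ∈ S := hp _ (by simp)
      by_cases hcA : c ∈ componentAvoiding G S x a
      · by_cases hux : u = x
        · subst hux
          exact ReachIn.refl ⟨huS, hv⟩
        · exact absurd (mem_componentAvoiding_of_adj hcA huS hux huc.symm) hv
      · exact (ReachIn.of_adj (S := S \ componentAvoiding G S x a) huc ⟨huS, hv⟩
          ⟨hp _ (by simp), hcA⟩).trans
          (ih hw (fun z hz => hp _ (by simp [hz])) hcA)

lemma diff_componentAvoiding_connected (hS : (G.induce S).Connected) (hx : x ∈ S)
    (ha : a ∈ S) (hax : a ≠ x) :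
    (G.induce (S \ componentAvoiding G S x a)).Connected := by
  have hto : ∀ v ∈ S \ componentAvoiding G S x a,
      ReachIn G (S \ componentAvoiding G S x a) v x := by
    rintro v ⟨hvS, hvA⟩
    obtain ⟨p, hp⟩ := (connected_induce_iff.1 hS).2 v hvS a ha
    exact reachIn_diff_componentAvoiding p (mem_componentAvoiding_self ha hax) hp hvA
  exact connected_induce_iff.2 ⟨⟨x, hx, notMem_componentAvoiding⟩,
    fun u hu v hv => (hto u hu).trans (hto v hv).symm⟩

lemma insert_componentAvoiding_union (hx : x ∈ S) :
    insert x (componentAvoiding G S x a) ∪ (S \ componentAvoiding G S x a) = S := by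
  refine Set.Subset.antisymm (Set.union_subset
    (Set.insert_subset hx componentAvoiding_subset_self) Set.sdiff_subset)
    fun z hz => ?_
  by_cases hzA : z ∈ componentAvoiding G S x a
  exacts [Or.inl (Or.inr hzA), Or.inr ⟨hz, hzA⟩]

lemma eq_of_mem_insert_componentAvoiding_of_mem_diff {z : V}
    (h₁ : z ∈ insert x (componentAvoiding G S x a)) (h₂ : z ∈ S \ componentAvoiding G S x a) :
    z = x :=
  h₁.resolve_right h₂.2

lemma exists_not_reachIn (hcut : ¬ (G.induce (S \ {x})).Preconnected) (a : V) :
    ∃ b ∈ S, b ≠ x ∧ ¬ ReachIn G (S \ {x}) a b := by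
  by_contra! hcon
  exact hcut (preconnected_induce_iff.2 fun u hu v hv =>
    (hcon u hu.1 hu.2).symm.trans (hcon v hv.1 hv.2))

end Components

section Blocks

def Nonseparable (G : SimpleGraph V) (B : Set V) : Prop :=
  (G.induce B).Connected ∧ ATPaper.NoCutVtx G B

/-- The blocks of `G[S]` are cliques or cycles. -/
def GallaiBlocksIn (G : SimpleGraph V) (S : Set V) : Prop :=
  ∀ B ⊆ S, Nonseparable G B → (∀ C, B ⊆ C → C ⊆ S → Nonseparable G C → C = B) →
    G.IsClique B ∨ (3 ≤ B.ncard ∧ ∀ v ∈ B, Nat.card {u : V | u ∈ B ∧ G.Adj v u} = 2)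

lemma Nonseparable.reachIn_diff_singleton {C : Set V} (hC : Nonseparable G C) (z : V)
    {u v : V} (hu : u ∈ C \ {z}) (hv : v ∈ C \ {z}) : ReachIn G (C \ {z}) u v := by
  by_cases hz : z ∈ C
  · exact preconnected_induce_iff.1 (hC.2 z hz) u hu v hv
  · rw [Set.sdiff_singleton_eq_self hz] at hu hv ⊢
    exact preconnected_induce_iff.1 hC.1.preconnected u hu v hv

/-- Singletons are cliques, so only blocks with two or more vertices have to be checked. -/
lemma GallaiBlocksIn.mono {S S' : Set V} (hbg : GallaiBlocksIn G S) (hS' : S' ⊆ S)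
    (hconf : ∀ B C, B ⊆ S' → B.Nontrivial → B ⊆ C → C ⊆ S → Nonseparable G C → C ⊆ S') :
    GallaiBlocksIn G S' := by
  intro B hBS' hB hmax
  rcases B.subsingleton_or_nontrivial with hsub | hnt
  · exact Or.inl (hsub.pairwise G.Adj)
  · exact hbg B (hBS'.trans hS') hB fun C hBC hCS hC =>
      hmax C hBC (hconf B C hBS' hnt hBC hCS hC) hC

variable {S : Set V} {x a : V}

lemma subset_insert_componentAvoiding {C : Set V} (hCS : C ⊆ S) (hC : Nonseparable G C)
    {c : V} (hcC : c ∈ C) (hcA : c ∈ componentAvoiding G S x a) :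
    C ⊆ insert x (componentAvoiding G S x a) := by
  intro c' hc'
  by_cases hc'x : c' = x
  · exact Or.inl hc'x
  refine Or.inr (hcA.trans ?_)
  exact (hC.reachIn_diff_singleton x ⟨hcC, (componentAvoiding_subset hcA).2⟩ ⟨hc', hc'x⟩).mono
    (Set.sdiff_subset_sdiff_left hCS)

lemma subset_diff_componentAvoiding {C : Set V} (hCS : C ⊆ S) (hC : Nonseparable G C)
    {c : V} (hcC : c ∈ C) (hcA : c ∉ componentAvoiding G S x a) (hcx : c ≠ x) :
    C ⊆ S \ componentAvoiding G S x a := by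
  refine fun c' hc' => ⟨hCS hc', fun hc'A => ?_⟩
  rcases subset_insert_componentAvoiding hCS hC hc' hc'A hcC with hcx' | hcA'
  exacts [hcx hcx', hcA hcA']

lemma GallaiBlocksIn.insert_componentAvoiding (hbg : GallaiBlocksIn G S) (hx : x ∈ S) :
    GallaiBlocksIn G (insert x (componentAvoiding G S x a)) :=
  hbg.mono (Set.insert_subset hx componentAvoiding_subset_self)
    fun B C hB hnt hBC hCS hC => by
      obtain ⟨c, hcB, hcx⟩ := hnt.exists_ne x
      exact subset_insert_componentAvoiding hCS hC (hBC hcB) ((hB hcB).resolve_left hcx)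

lemma GallaiBlocksIn.diff_componentAvoiding (hbg : GallaiBlocksIn G S) :
    GallaiBlocksIn G (S \ componentAvoiding G S x a) :=
  hbg.mono Set.sdiff_subset fun B C hB hnt hBC hCS hC => by
    obtain ⟨c, hcB, hcx⟩ := hnt.exists_ne x
    exact subset_diff_componentAvoiding hCS hC (hBC hcB) (hB hcB).2 hcx

/-- A block of `S` through the pendant vertex `x` is the edge `xy`, so every block of `A` is
a block of `S`. -/
lemma GallaiBlocksIn.componentAvoiding (hbg : GallaiBlocksIn G S) {y : V}
    (hy : y ∈ componentAvoiding G S x a)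
    (hpend : ∀ u ∈ componentAvoiding G S x a, G.Adj x u → u = y) :
    GallaiBlocksIn G (componentAvoiding G S x a) :=
  hbg.mono componentAvoiding_subset_self fun B C hB hnt hBC hCS hC => by
    obtain ⟨z, hzB, hzy⟩ := hnt.exists_ne y
    have hCx := subset_insert_componentAvoiding hCS hC (hBC hzB) (hB hzB)
    intro c hcC
    refine (hCx hcC).resolve_left ?_
    rintro rfl
    have hyx : y ≠ c := fun h => notMem_componentAvoiding (h ▸ hy)
    have hzx : z ≠ c := fun h => notMem_componentAvoiding (h ▸ hB hzB)
    obtain ⟨u, ⟨huC, huy⟩, hcu⟩ :=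
      (hC.reachIn_diff_singleton y ⟨hcC, hyx.symm⟩ ⟨hBC hzB, hzy⟩).exists_adj hzx.symm
    exact huy (hpend u (((hCx huC).resolve_left hcu.ne')) hcu)

lemma gallaiBlocksIn_univ
    (hG : ∀ B, ATPaper.IsBlockSet G B → G.IsClique B ∨ ATPaper.IsOddCycleSet G B) :
    GallaiBlocksIn G Set.univ := by
  intro B _ hB hmax
  refine (hG B ⟨hB.1, hB.2, fun C hBC hC hC' => hmax C hBC (Set.subset_univ C) ⟨hC, hC'⟩⟩).imp
    id fun hodd => ⟨?_, hodd.2.2.2⟩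
  rw [← Nat.card_coe_set_eq]
  exact hodd.2.2.1

end Blocks

section Counting

variable [Fintype V]

noncomputable def degIn (G : SimpleGraph V) (S : Set V) (x : V) : ℕ :=
  (univ.filter fun u => u ∈ S ∧ G.Adj x u).card

noncomputable def dartCount (G : SimpleGraph V) (S : Set V) : ℕ :=
  (univ.filter fun p : V × V => p.1 ∈ S ∧ p.2 ∈ S ∧ G.Adj p.1 p.2).card

lemma degIn_eq_natCard (S : Set V) (x : V) :
    degIn G S x = Nat.card {u : V | u ∈ S ∧ G.Adj x u} := by
  rw [Nat.card_coe_set_eq, Set.ncard_eq_toFinset_card', degIn]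
  congr 1; ext u; simp

lemma degIn_univ (x : V) : degIn G Set.univ x = G.degree x := by
  rw [degIn, ← SimpleGraph.card_neighborFinset_eq_degree]
  congr 1; ext u; simp

lemma degIn_mono {S S' : Set V} (h : S ⊆ S') (x : V) : degIn G S x ≤ degIn G S' x :=
  card_le_card fun u hu => by
    simp only [mem_filter, mem_univ, true_and] at hu ⊢
    exact ⟨h hu.1, hu.2⟩

lemma degIn_le_degree (S : Set V) (x : V) : degIn G S x ≤ G.degree x :=
  degIn_univ (G := G) x ▸ degIn_mono (Set.subset_univ S) x

lemma degIn_union {S₁ S₂ : Set V} {x : V} (hI : ∀ z ∈ S₁, z ∈ S₂ → z = x) :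
    degIn G (S₁ ∪ S₂) x = degIn G S₁ x + degIn G S₂ x := by
  rw [degIn, degIn, degIn, ← card_union_of_disjoint]
  · congr 1; ext u
    simp only [mem_filter, mem_union, Set.mem_union, mem_univ, true_and]
    tauto
  · rw [disjoint_left]
    intro u hu1 hu2
    simp only [mem_filter, mem_univ, true_and] at hu1 hu2
    exact G.irrefl (hI u hu1.1 hu2.1 ▸ hu1.2)

lemma dartCount_eq_sum (S : Set V) : dartCount G S = ∑ v ∈ S.toFinset, degIn G S v := by
  rw [dartCount, card_eq_sum_card_fiberwise (f := Prod.fst) (t := S.toFinset)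
    (fun p hp => by simp only [coe_filter, Set.mem_ofPred_eq, mem_univ, true_and] at hp
                    simpa using hp.1)]
  refine sum_congr rfl fun v hv => ?_
  have hvS : v ∈ S := by simpa using hv
  apply card_nbij' Prod.snd (fun u => (v, u))
  · intro p hp
    simp only [coe_filter, mem_filter, mem_univ, true_and, Set.mem_ofPred_eq] at hp ⊢
    exact ⟨hp.1.2.1, hp.2 ▸ hp.1.2.2⟩
  · intro u hu
    simp only [coe_filter, mem_filter, mem_univ, true_and, Set.mem_ofPred_eq] at hu ⊢
    exact ⟨⟨hvS, hu⟩, trivial⟩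
  · intro p hp
    simp only [coe_filter, mem_filter, mem_univ, true_and, Set.mem_ofPred_eq] at hp
    exact Prod.ext hp.2.symm rfl
  · intro u _
    rfl

lemma dartCount_union {S₁ S₂ : Set V} {x : V} (hI : ∀ z ∈ S₁, z ∈ S₂ → z = x)
    (hcross : ∀ u v, G.Adj u v → u ∈ S₁ ∪ S₂ → v ∈ S₁ ∪ S₂ →
      (u ∈ S₁ ∧ v ∈ S₁) ∨ (u ∈ S₂ ∧ v ∈ S₂)) :
    dartCount G (S₁ ∪ S₂) = dartCount G S₁ + dartCount G S₂ := by
  rw [dartCount, dartCount, dartCount, ← card_union_of_disjoint]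
  · congr 1; ext p
    simp only [mem_filter, mem_union, mem_univ, true_and]
    constructor
    · rintro ⟨h1, h2, h3⟩
      rcases hcross p.1 p.2 h3 h1 h2 with ⟨a, b⟩ | ⟨a, b⟩
      exacts [Or.inl ⟨a, b, h3⟩, Or.inr ⟨a, b, h3⟩]
    · rintro (⟨h1, h2, h3⟩ | ⟨h1, h2, h3⟩)
      exacts [⟨Or.inl h1, Or.inl h2, h3⟩, ⟨Or.inr h1, Or.inr h2, h3⟩]
  · rw [disjoint_left]
    intro p hp1 hp2
    simp only [mem_filter, mem_univ, true_and] at hp1 hp2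
    have h1 : p.1 = x := hI _ hp1.1 hp2.1
    have h2 : p.2 = x := hI _ hp1.2.1 hp2.2.1
    exact G.irrefl (h1 ▸ h2 ▸ hp1.2.2)

lemma degIn_of_isClique {S : Set V} (hS : G.IsClique S) {v : V} (hv : v ∈ S) :
    degIn G S v = S.ncard - 1 := by
  rw [degIn, Set.ncard_eq_toFinset_card', ← card_erase_of_mem (Set.mem_toFinset.2 hv)]
  congr 1; ext u
  simp only [mem_filter, mem_univ, true_and, mem_erase, Set.mem_toFinset]
  exact ⟨fun h => ⟨h.2.ne', h.1⟩, fun h => ⟨h.2, hS hv h.2 (Ne.symm h.1)⟩⟩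

lemma dartCount_of_isClique {S : Set V} (hS : G.IsClique S) :
    dartCount G S = S.ncard * (S.ncard - 1) := by
  rw [dartCount_eq_sum, sum_congr rfl fun v hv => degIn_of_isClique hS (Set.mem_toFinset.1 hv),
    sum_const, smul_eq_mul, Set.ncard_eq_toFinset_card']

lemma dartCount_of_degIn_eq_two {S : Set V} (h2 : ∀ v ∈ S, degIn G S v = 2) :
    dartCount G S = 2 * S.ncard := by
  rw [dartCount_eq_sum, sum_congr rfl fun v hv => h2 v (Set.mem_toFinset.1 hv),
    sum_const, smul_eq_mul, Set.ncard_eq_toFinset_card', mul_comm]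

lemma dartCount_univ : dartCount G Set.univ = 2 * G.edgeFinset.card := by
  rw [dartCount_eq_sum, ← G.sum_degrees_eq_twice_card_edges]
  exact sum_congr (by ext; simp) fun v _ => degIn_univ v

lemma eq_of_degIn_le_one {S : Set V} {x y : V} (h : degIn G S x ≤ 1) (hy : y ∈ S)
    (hxy : G.Adj x y) {u : V} (hu : u ∈ S) (hxu : G.Adj x u) : u = y :=
  card_le_one.1 h u (by simp [hu, hxu]) y (by simp [hy, hxy])

lemma dartCount_insert_of_pendant {A : Set V} {x y : V} (hxA : x ∉ A) (hy : y ∈ A)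
    (hxy : G.Adj x y) (hpend : ∀ u ∈ A, G.Adj x u → u = y) :
    dartCount G (insert x A) = dartCount G A + 2 := by
  have hunion : insert x A = A ∪ {x, y} := by
    rw [Set.union_insert, Set.union_singleton, Set.insert_eq_of_mem hy]
  have hpair : dartCount G {x, y} = 2 := by
    rw [dartCount_of_isClique (G.isClique_pair.2 fun _ => hxy), Set.ncard_pair hxy.ne]
  rw [hunion, dartCount_union (x := y), hpair]
  · rintro z hzA (rfl | rfl)
    exacts [absurd hzA hxA, rfl]
  · intro u v huv hu hv
    rw [← hunion] at hu hv
    by_cases hux : u = x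
    · subst hux
      exact Or.inr ⟨Or.inl rfl, Or.inr (hpend v (hv.resolve_left huv.ne') huv)⟩
    by_cases hvx : v = x
    · subst hvx
      exact Or.inr ⟨Or.inr (hpend u (hu.resolve_left hux) huv.symm), Or.inl rfl⟩
    exact Or.inl ⟨hu.resolve_left hux, hv.resolve_left hvx⟩

end Counting

section Cut

variable [Fintype V] {S : Set V} {x a : V}

lemma dartCount_eq_add_of_cut (hx : x ∈ S) :
    dartCount G S = dartCount G (insert x (componentAvoiding G S x a)) +
      dartCount G (S \ componentAvoiding G S x a) := by
  conv_lhs => rw [← insert_componentAvoiding_union (G := G) (a := a) hx]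
  refine dartCount_union (fun z => eq_of_mem_insert_componentAvoiding_of_mem_diff) ?_
  intro u v huv hu hv
  rw [insert_componentAvoiding_union hx] at hu hv
  by_cases huA : u ∈ componentAvoiding G S x a
  · by_cases hvx : v = x
    · exact Or.inl ⟨Or.inr huA, Or.inl hvx⟩
    · exact Or.inl ⟨Or.inr huA, Or.inr (mem_componentAvoiding_of_adj huA hv hvx huv)⟩
  by_cases hvA : v ∈ componentAvoiding G S x a
  · by_cases hux : u = x
    · exact Or.inl ⟨Or.inl hux, Or.inr hvA⟩
    · exact absurd (mem_componentAvoiding_of_adj hvA hu hux huv.symm) huA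
  exact Or.inr ⟨⟨hu, huA⟩, hv, hvA⟩

lemma degIn_eq_add_of_cut (hx : x ∈ S) :
    degIn G S x = degIn G (insert x (componentAvoiding G S x a)) x +
      degIn G (S \ componentAvoiding G S x a) x := by
  conv_lhs => rw [← insert_componentAvoiding_union (G := G) (a := a) hx]
  exact degIn_union fun z => eq_of_mem_insert_componentAvoiding_of_mem_diff

lemma ncard_add_ncard_of_cut (hx : x ∈ S) :
    (insert x (componentAvoiding G S x a)).ncard + (S \ componentAvoiding G S x a).ncard =
      S.ncard + 1 := by
  have hinter : insert x (componentAvoiding G S x a) ∩ (S \ componentAvoiding G S x a) = {x} :=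
    Set.Subset.antisymm (fun z hz => eq_of_mem_insert_componentAvoiding_of_mem_diff hz.1 hz.2)
      (Set.singleton_subset_iff.2 ⟨Or.inl rfl, hx, notMem_componentAvoiding⟩)
  have h := Set.ncard_union_add_ncard_inter (insert x (componentAvoiding G S x a))
    (S \ componentAvoiding G S x a)
  rwa [insert_componentAvoiding_union hx, hinter, Set.ncard_singleton, eq_comm] at h

lemma ncard_insert_componentAvoiding_lt {b : V} (hx : x ∈ S) (hb : b ∈ S) (hbx : b ≠ x)
    (hbA : b ∉ componentAvoiding G S x a) :
    (insert x (componentAvoiding G S x a)).ncard < S.ncard :=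
  Set.ncard_lt_ncard <| (Set.insert_subset hx componentAvoiding_subset_self).ssubset_of_not_subset
    fun h => (h hb).elim hbx hbA

lemma ncard_diff_componentAvoiding_lt (ha : a ∈ S) (hax : a ≠ x) :
    (S \ componentAvoiding G S x a).ncard < S.ncard :=
  Set.ncard_lt_ncard <| Set.sdiff_subset.ssubset_of_not_subset fun h =>
    (h ha).2 (mem_componentAvoiding_self ha hax)

lemma ncard_componentAvoiding_lt (hx : x ∈ S) : (componentAvoiding G S x a).ncard < S.ncard :=
  Set.ncard_lt_ncard <| componentAvoiding_subset_self.ssubset_of_not_subset fun h =>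
    notMem_componentAvoiding (h hx)

end Cut

noncomputable def avgDegBound (k : ℕ) : ℝ := k - 2 + 2 / (k - 1)

section Arithmetic

variable {k m : ℕ}

lemma three_le_avgDegBound (hk : 5 ≤ k) : 3 ≤ avgDegBound k := by
  have hk' : (5 : ℝ) ≤ k := by exact_mod_cast hk
  have : 0 < 2 / ((k : ℝ) - 1) := div_pos two_pos (by linarith)
  unfold avgDegBound
  linarith

lemma mul_sub_one_le_avgDegBound_mul_sub_two (hk : 3 ≤ k) (hm : 1 ≤ m) (hmk : m + 1 ≤ k) :
    (m : ℝ) * (m - 1) ≤ avgDegBound k * m - 2 := by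
  have hk' : (3 : ℝ) ≤ k := by exact_mod_cast hk
  have hm' : (1 : ℝ) ≤ m := by exact_mod_cast hm
  have hmk' : (m : ℝ) + 1 ≤ k := by exact_mod_cast hmk
  have hd : 2 / ((k : ℝ) - 1) ≤ 1 := (div_le_one (by linarith)).2 (by linarith)
  -- equality for `m = k - 1`: this is where the constant comes from
  have key : avgDegBound k * m - 2 - m * (m - 1) = (k - 1 - m) * (m - 2 / ((k : ℝ) - 1)) := by
    unfold avgDegBound
    field_simp [show (k : ℝ) - 1 ≠ 0 by linarith]
    ring
  rw [← sub_nonneg, key]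
  exact mul_nonneg (by linarith) (by linarith)

lemma mul_sub_one_le_avgDegBound_mul_sub (hm : 1 ≤ m) (hmk : m + 2 ≤ k) :
    (m : ℝ) * (m - 1) ≤ avgDegBound k * m - avgDegBound k := by
  have hm' : (1 : ℝ) ≤ m := by exact_mod_cast hm
  have hmk' : (m : ℝ) + 2 ≤ k := by exact_mod_cast hmk
  have hmc : (m : ℝ) ≤ avgDegBound k := by
    have : 0 < 2 / ((k : ℝ) - 1) := div_pos two_pos (by linarith)
    unfold avgDegBound
    linarith
  nlinarith [mul_le_mul_of_nonneg_right hmc (sub_nonneg.2 hm')]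

lemma two_mul_le_avgDegBound_mul_sub (hk : 5 ≤ k) (hm : 3 ≤ m) :
    2 * (m : ℝ) ≤ avgDegBound k * m - avgDegBound k := by
  have hc := three_le_avgDegBound hk
  have hm' : (3 : ℝ) ≤ m := by exact_mod_cast hm
  nlinarith [mul_le_mul_of_nonneg_left hm' (by linarith : (0 : ℝ) ≤ avgDegBound k - 2)]

end Arithmetic

section EdgeBound

variable {k : ℕ}

/-- `r ∉ W^k(G[S])` in the notation of the paper. -/
def FreeIn (G : SimpleGraph V) (k : ℕ) (S : Set V) (r : V) : Prop :=
  ∀ Q : Finset V, ↑Q ⊆ S → G.IsNClique (k - 1) Q → r ∉ Q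

lemma FreeIn.mono {S S' : Set V} {r : V} (h : FreeIn G k S r) (hS' : S' ⊆ S) :
    FreeIn G k S' r :=
  fun Q hQ => h Q (hQ.trans hS')

variable [Fintype V]

lemma freeIn_of_degIn_lt {S : Set V} {x : V} (h : degIn G S x + 2 < k) : FreeIn G k S x := by
  intro Q hQS hQ hxQ
  have hsub : Q.erase x ⊆ univ.filter fun u => u ∈ S ∧ G.Adj x u := fun u hu => by
    simp only [mem_filter, mem_univ, true_and]
    exact ⟨hQS (mem_of_mem_erase hu), hQ.1 hxQ (mem_of_mem_erase hu) (ne_of_mem_erase hu).symm⟩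
  have := card_le_card hsub
  rw [card_erase_of_mem hxQ, hQ.2] at this
  unfold degIn at h
  omega

/-- Since `x` has degree at most `k - 1`, it lies in a `K_{k-1}` on at most one side of a cut. -/
lemma degIn_le_one_of_not_freeIn {S₁ S₂ : Set V} {x : V} (h : ¬ FreeIn G k S₂ x)
    (hsum : degIn G S₁ x + degIn G S₂ x ≤ k - 1) : degIn G S₁ x ≤ 1 := by
  by_contra hlt
  exact h (freeIn_of_degIn_lt (by omega))

lemma isNClique_toFinset {S : Set V} (hS : G.IsClique S) : G.IsNClique S.ncard S.toFinset :=
  ⟨by simpa using hS, (Set.ncard_eq_toFinset_card' S).symm⟩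

/-- The strengthened bound that is proved by induction over cut vertices. -/
def EdgeBound (G : SimpleGraph V) (k : ℕ) (S : Set V) : Prop :=
  (dartCount G S : ℝ) ≤ avgDegBound k * S.ncard - 2 ∧
    ∀ r ∈ S, FreeIn G k S r → (dartCount G S : ℝ) ≤ avgDegBound k * S.ncard - avgDegBound k

/-- When `x` is a pendant vertex of `insert x A`, the bound for `A` takes the place of the one
for `insert x A`. -/
lemma dartCount_le_of_pendant {S : Set V} {x a y r : V} (hx : x ∈ S)
    (hy : y ∈ componentAvoiding G S x a) (hxy : G.Adj x y)
    (hpend : ∀ u ∈ componentAvoiding G S x a, G.Adj x u → u = y)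
    (hA : EdgeBound G k (componentAvoiding G S x a))
    (hB : EdgeBound G k (S \ componentAvoiding G S x a))
    (hr : r ∈ componentAvoiding G S x a) (hfr : FreeIn G k S r) :
    (dartCount G S : ℝ) ≤ avgDegBound k * S.ncard - avgDegBound k := by
  have hn : ((componentAvoiding G S x a).ncard : ℝ) + (S \ componentAvoiding G S x a).ncard =
      S.ncard := by
    have h := ncard_add_ncard_of_cut (G := G) (a := a) hx
    rw [Set.ncard_insert_of_notMem notMem_componentAvoiding, add_right_comm] at h
    exact_mod_cast Nat.add_right_cancel h
  have he : (dartCount G S : ℝ) = dartCount G (componentAvoiding G S x a) + 2 +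
      dartCount G (S \ componentAvoiding G S x a) := by
    rw [dartCount_eq_add_of_cut hx,
      dartCount_insert_of_pendant notMem_componentAvoiding hy hxy hpend]
    push_cast
    ring
  have hnc := congrArg (avgDegBound k * ·) hn
  simp only [mul_add] at hnc
  linarith [hA.2 r hr (hfr.mono componentAvoiding_subset_self), hB.1]

variable (hdeg : ∀ v, G.degree v ≤ k - 1) (hk : 5 ≤ k)
include hdeg hk

lemma edgeBound_of_nonseparable (hK : G.CliqueFree k) {S : Set V} (hS : Nonseparable G S)
    (hbg : GallaiBlocksIn G S) : EdgeBound G k S := by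
  obtain ⟨v, hv⟩ : S.Nonempty := Set.nonempty_coe_sort.1 hS.1.nonempty
  have hm : 1 ≤ S.ncard := (Set.ncard_pos).2 ⟨v, hv⟩
  rcases hbg S subset_rfl hS fun C h1 h2 _ => h2.antisymm h1 with hcl | ⟨h3, h2⟩
  · have hmk : S.ncard + 1 ≤ k := by
      have hdv := (degIn_of_isClique hcl hv ▸ degIn_le_degree S v).trans (hdeg v)
      have hne : S.ncard ≠ k := fun h => hK _ (h ▸ isNClique_toFinset hcl)
      omega
    have hdc : (dartCount G S : ℝ) = S.ncard * (S.ncard - 1) := by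
      rw [dartCount_of_isClique hcl]
      push_cast [Nat.cast_sub hm]
      ring
    refine ⟨hdc ▸ mul_sub_one_le_avgDegBound_mul_sub_two (by omega) hm hmk, fun r hr hfr => ?_⟩
    have hne : S.ncard ≠ k - 1 :=
      fun h => hfr _ (by simp) (h ▸ isNClique_toFinset hcl) (Set.mem_toFinset.2 hr)
    exact hdc ▸ mul_sub_one_le_avgDegBound_mul_sub hm (by omega)
  · have hdc : (dartCount G S : ℝ) = 2 * S.ncard := by
      rw [dartCount_of_degIn_eq_two fun v hv => (degIn_eq_natCard S v).trans (h2 v hv)]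
      push_cast
      ring
    have hcyc := two_mul_le_avgDegBound_mul_sub hk h3
    have hc := three_le_avgDegBound hk
    exact ⟨by linarith, fun _ _ _ => by linarith⟩

lemma edgeBound_of_cut {S : Set V} (hS : (G.induce S).Connected) (hbg : GallaiBlocksIn G S)
    {x a : V} (hx : x ∈ S) (hcut : ¬ (G.induce (S \ {x})).Preconnected) (ha : a ∈ S)
    (hax : a ≠ x)
    (IH : ∀ S' : Set V, S'.ncard < S.ncard → (G.induce S').Connected → GallaiBlocksIn G S' →
      EdgeBound G k S') :
    (dartCount G S : ℝ) ≤ avgDegBound k * S.ncard - 2 ∧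
      ∀ r ∈ insert x (componentAvoiding G S x a), FreeIn G k S r →
        (dartCount G S : ℝ) ≤ avgDegBound k * S.ncard - avgDegBound k := by
  obtain ⟨b, hb, hbx, hbA⟩ := exists_not_reachIn hcut a
  set A := componentAvoiding G S x a
  obtain ⟨y, hyA, hxy⟩ := exists_adj_componentAvoiding hS ha hax hb hbA
  have hAS : A ⊆ S := componentAvoiding_subset_self
  set c := avgDegBound k
  have hn : c * (insert x A).ncard + c * (S \ A).ncard = c * S.ncard + c := by
    have h : ((insert x A).ncard : ℝ) + (S \ A).ncard = S.ncard + 1 := by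
      exact_mod_cast ncard_add_ncard_of_cut (G := G) hx
    rw [← mul_add, h, mul_add_one]
  have he : (dartCount G S : ℝ) = dartCount G (insert x A) + dartCount G (S \ A) := by
    exact_mod_cast dartCount_eq_add_of_cut hx
  have hsum : degIn G (insert x A) x + degIn G (S \ A) x ≤ k - 1 :=
    degIn_eq_add_of_cut (G := G) (a := a) hx ▸ (degIn_le_degree S x).trans (hdeg x)
  have h₁ : EdgeBound G k (insert x A) :=
    IH _ (ncard_insert_componentAvoiding_lt hx hb hbx hbA)
      (insert_componentAvoiding_connected ha hax hyA hxy) (hbg.insert_componentAvoiding hx)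
  have h₂ : EdgeBound G k (S \ A) :=
    IH _ (ncard_diff_componentAvoiding_lt ha hax) (diff_componentAvoiding_connected hS hx ha hax)
      hbg.diff_componentAvoiding
  by_cases hx₂ : FreeIn G k (S \ A) x
  · have := h₂.2 x ⟨hx, notMem_componentAvoiding⟩ hx₂
    exact ⟨by linarith [h₁.1], fun r hr hfr => by
      linarith [h₁.2 r hr (hfr.mono (Set.insert_subset hx hAS))]⟩
  -- `x` has a `K_{k-1}` in `S \ A`, hence is a pendant vertex of `insert x A`
  have hdx := degIn_le_one_of_not_freeIn hx₂ hsum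
  have hpend : ∀ u ∈ A, G.Adj x u → u = y :=
    fun u hu => eq_of_degIn_le_one hdx (Or.inr hyA) hxy (Or.inr hu)
  have := h₁.2 x (Set.mem_insert x A) (freeIn_of_degIn_lt (by omega))
  refine ⟨by linarith [h₂.1], fun r hr hfr => ?_⟩
  have hrA : r ∈ A := hr.resolve_left fun hrx => hx₂ (hrx ▸ hfr.mono Set.sdiff_subset)
  exact dartCount_le_of_pendant hx hyA hxy hpend
    (IH _ (ncard_componentAvoiding_lt hx) (componentAvoiding_connected ha hax)
      (hbg.componentAvoiding hyA hpend)) h₂ hrA hfr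

theorem edgeBound (hK : G.CliqueFree k) (S : Set V) (hS : (G.induce S).Connected)
    (hbg : GallaiBlocksIn G S) : EdgeBound G k S := by
  induction hn : S.ncard using Nat.strong_induction_on generalizing S with
  | _ n IH =>
  by_cases hnc : ATPaper.NoCutVtx G S
  · exact edgeBound_of_nonseparable hdeg hk hK ⟨hS, hnc⟩ hbg
  obtain ⟨x, hx, hcut⟩ : ∃ x ∈ S, ¬ (G.induce (S \ {x})).Preconnected := by
    simpa [ATPaper.NoCutVtx] using hnc
  have step {a : V} (ha : a ∈ S) (hax : a ≠ x) :=
    edgeBound_of_cut hdeg hk hS hbg hx hcut ha hax fun S' hS' hc hg =>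
      IH _ (hn ▸ hS') S' hc hg rfl
  obtain ⟨a, ha⟩ : (S \ {x}).Nonempty := by
    by_contra hemp
    exact hcut (preconnected_induce_iff.2 fun u hu => (hemp ⟨u, hu⟩).elim)
  refine ⟨(step ha.1 ha.2).1, fun r hr hfr => ?_⟩
  rcases eq_or_ne r x with rfl | hrx
  · exact (step ha.1 ha.2).2 r (Set.mem_insert r _) hfr
  · exact (step hr hrx).2 r (Or.inr (mem_componentAvoiding_self hr hrx)) hfr

end EdgeBound

/-- With maximum degree at most `k - 1`, a `K_k` is closed under adjacency, hence is all of a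
connected graph. -/
lemma cliqueFree_of_not_isCompleteK [Fintype V] {k : ℕ} (hk : 0 < k) (hconn : G.Connected)
    (hdeg : ∀ v, G.degree v ≤ k - 1) (hK : ¬ ATPaper.IsCompleteK G k) : G.CliqueFree k := by
  intro Q hQ
  have hclosed : ∀ u ∈ Q, ∀ v, G.Adj u v → v ∈ Q := fun u hu v huv => by
    have hnbr : Q.erase u = G.neighborFinset u :=
      eq_of_subset_of_card_le (fun w hw => (G.mem_neighborFinset u w).2
        (hQ.1 hu (mem_of_mem_erase hw) (ne_of_mem_erase hw).symm))
        (by rw [card_erase_of_mem hu, hQ.2, G.card_neighborFinset_eq_degree]; exact hdeg u)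
    exact mem_of_mem_erase (hnbr ▸ (G.mem_neighborFinset u v).2 huv)
  obtain ⟨u, hu⟩ : Q.Nonempty := card_pos.1 (hQ.2 ▸ hk)
  have hall : ∀ v, v ∈ Q := fun v => by
    by_contra hv
    obtain ⟨d, -, hd, hd'⟩ := (hconn u v).some.exists_boundary_dart (Q : Set V) hu hv
    exact hd' (hclosed _ hd _ d.adj)
  have hcard : Fintype.card V = k := by
    rw [← hQ.2, eq_univ_of_forall hall, card_univ]
  refine hK ⟨⟨Fintype.equivFinOfCardEq hcard, fun {p q} => ?_⟩⟩
  simp only [SimpleGraph.top_adj, ne_eq, EmbeddingLike.apply_eq_iff_eq]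
  exact ⟨hQ.1 (hall p) (hall q), SimpleGraph.Adj.ne⟩

end GallaiTree

/-- for `k ≥ 5` and `T ∈ 𝒯_k`, `2‖T‖ ≤ (k - 2 + 2/(k-1))·|T| - 2`. -/
theorem stmt_3 {V : Type*} [Fintype V] (k : ℕ) (hk : 5 ≤ k) (T : SimpleGraph V)
    (hT : ATPaper.MemTk T k) :
    2 * (Nat.card T.edgeSet : ℝ) ≤
      ((k : ℝ) - 2 + 2 / ((k : ℝ) - 1)) * (Nat.card V : ℝ) - 2 := by
  obtain ⟨⟨hconn, hblocks⟩, hdeg, hK⟩ := hT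
  have hdeg' : ∀ v, T.degree v ≤ k - 1 := fun v => by
    simpa [← T.card_neighborSet_eq_degree, Nat.card_eq_fintype_card] using hdeg v
  have hbound := (GallaiTree.edgeBound hdeg' hk
    (GallaiTree.cliqueFree_of_not_isCompleteK (by omega) hconn hdeg' hK) Set.univ
    (T.induceUnivIso.connected_iff.2 hconn) (GallaiTree.gallaiBlocksIn_univ hblocks)).1
  rw [GallaiTree.dartCount_univ, Set.ncard_univ] at hbound
  rw [Nat.card_eq_fintype_card (α := T.edgeSet), ← T.edgeFinset_card]
  push_cast at hbound
  exact hbound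
end

section
/- Let k ≥ 5 be an integer and let p, f, h be real numbers such that 2||T|| ≤ (k − 3 + p)·|T| + f + h·q(T) holds for every T ∈ 𝒯_k containing a copy of K_{k−1}. Then p ≥ (3k−5)/(k²−4k+5). -/
open scoped Classical

/-!
Take a chain of `n + 1` units, each a `K_{k-1}` with `k - 3` pendant copies of `K_{k-2}` hanging
from distinct vertices by bridges, consecutive units joined by a bridge between two further
vertices. Its blocks are cliques, its maximum degree is `k - 1`, and every vertex of a `K_{k-1}`
other than the two free ports at the ends of the chain is a cut vertex, so `q ≤ 2`. A unit has
`k² - 4k + 5` vertices, and the chain has degree sum `(n + 1)((k - 3)(k² - 4k + 5) + 3k - 5) - 2`,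
so the hypothesis gives `(3k - 5)(n + 1) - O(1) ≤ p (k² - 4k + 5)(n + 1)` for every `n`.
-/

namespace SimpleGraph

variable {V ι : Type*} {G : SimpleGraph V}

def IsOnlyEdgeOut (G : SimpleGraph V) (S : Set V) (x y : V) : Prop :=
  x ∈ S ∧ y ∉ S ∧ ∀ u v, G.Adj u v → u ∈ S → v ∉ S → u = x ∧ v = y

namespace IsOnlyEdgeOut

variable {S X : Set V} {x y w : V}

lemma ne (h : G.IsOnlyEdgeOut S x y) : x ≠ y := fun hxy => h.2.1 (hxy ▸ h.1)

lemma compl (h : G.IsOnlyEdgeOut S x y) : G.IsOnlyEdgeOut Sᶜ y x :=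
  ⟨h.2.1, not_not.2 h.1, fun u v huv hu hv => (h.2.2 v u huv.symm (not_not.1 hv) hu).symm⟩

lemma not_reachable_induce (h : G.IsOnlyEdgeOut S x y) (hx : x ∉ X) {p q : X}
    (hp : (p : V) ∈ S) (hq : (q : V) ∉ S) : ¬ (G.induce X).Reachable p q := by
  rintro ⟨walk⟩
  obtain ⟨d, -, hd₁, hd₂⟩ := walk.exists_boundary_dart {r | (r : V) ∈ S} hp hq
  exact hx ((h.2.2 _ _ d.adj hd₁ hd₂).1 ▸ d.fst.2)

lemma subset_pair (h : G.IsOnlyEdgeOut S x y) {B : Set V} (hB : ATPaper.NoCutVtx G B)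
    (hx : x ∈ B) (hy : y ∈ B) : B ⊆ {x, y} := by
  intro z hz
  by_contra hzxy
  simp only [Set.mem_insert_iff, Set.mem_singleton_iff, not_or] at hzxy
  by_cases hzS : z ∈ S
  · exact h.not_reachable_induce (X := B \ {x}) (fun hx' => hx'.2 rfl)
      (p := ⟨z, hz, hzxy.1⟩) (q := ⟨y, hy, h.ne.symm⟩) hzS h.2.1
      (hB x hx _ _)
  · exact h.compl.not_reachable_induce (X := B \ {y}) (fun hy' => hy'.2 rfl)
      (p := ⟨z, hz, hzxy.2⟩) (q := ⟨x, hx, h.ne⟩) hzS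
      (not_not.2 h.1) (hB y hy _ _)

lemma not_preconnected_induce_compl (h : G.IsOnlyEdgeOut S x y) (hw : w ∈ S) (hwx : w ≠ x) :
    ¬ (G.induce {x}ᶜ).Preconnected := fun hpre =>
  h.not_reachable_induce (X := {x}ᶜ) (fun hx => hx rfl) (p := ⟨w, hwx⟩)
    (q := ⟨y, h.ne.symm⟩) hw h.2.1 (hpre _ _)

lemma not_adj_of_adj (h : G.IsOnlyEdgeOut S x y) (hwx : G.Adj w x) : ¬ G.Adj w y := by
  intro hwy
  by_cases hw : w ∈ S
  · exact G.irrefl ((h.2.2 w y hwy hw h.2.1).1 ▸ hwx)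
  · exact G.irrefl ((h.2.2 x w hwx.symm h.1 hw).2 ▸ hwy)

end IsOnlyEdgeOut

section Fibers

def CrossEdgesAreBridges (G : SimpleGraph V) (c : V → ι) : Prop :=
  ∀ u v, G.Adj u v → c u ≠ c v → ∃ S, G.IsOnlyEdgeOut S u v

variable {c : V → ι}

lemma isClique_of_connected_of_noCutVtx (hbr : G.CrossEdgesAreBridges c)
    (hfib : ∀ u v, c u = c v → u ≠ v → G.Adj u v)
    {B : Set V} (hB : (G.induce B).Connected) (hnc : ATPaper.NoCutVtx G B) : G.IsClique B := by
  by_cases hcross : ∃ x ∈ B, ∃ y ∈ B, G.Adj x y ∧ c x ≠ c y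
  · obtain ⟨x, hx, y, hy, hxy, hc⟩ := hcross
    obtain ⟨S, hS⟩ := hbr x y hxy hc
    exact (isClique_pair.2 fun _ => hxy).subset (hS.subset_pair hnc hx hy)
  · push Not at hcross
    intro u hu v hv huv
    refine hfib u v ?_ huv
    by_contra hne
    obtain ⟨walk⟩ := hB.preconnected ⟨u, hu⟩ ⟨v, hv⟩
    obtain ⟨d, -, hd₁, hd₂⟩ := walk.exists_boundary_dart {r | c r = c u} rfl (Ne.symm hne)
    exact hd₂ (hd₁ ▸ (hcross _ d.fst.2 _ d.snd.2 d.adj).symm)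

lemma IsClique.eq_of_three_le_card (hbr : G.CrossEdgesAreBridges c) {s : Finset V}
    (hs : G.IsClique s) (hcard : 3 ≤ s.card)
    {x y : V} (hx : x ∈ s) (hy : y ∈ s) : c x = c y := by
  by_contra hc
  have hxy : x ≠ y := fun h => hc (h ▸ rfl)
  obtain ⟨S, hS⟩ := hbr x y (hs hx hy hxy) hc
  have : 1 < (s.erase x).card := by rw [Finset.card_erase_of_mem hx]; omega
  obtain ⟨w, hw, hwy⟩ := Finset.exists_mem_ne this y
  obtain ⟨hwx, hws⟩ := Finset.mem_erase.1 hw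
  exact hS.not_adj_of_adj (hs hws hx hwx) (hs hws hy hwy)

lemma not_preconnected_induce_compl_of_adj (hbr : G.CrossEdgesAreBridges c)
    (hfib : ∀ u v, c u = c v → u ≠ v → G.Adj u v)
    {v y w : V} (hvy : G.Adj v y) (hc : c v ≠ c y) (hw : c w = c v) (hwv : w ≠ v) :
    ¬ (G.induce {v}ᶜ).Preconnected := by
  obtain ⟨S, hS⟩ := hbr v y hvy hc
  refine hS.not_preconnected_induce_compl (w := w) ?_ hwv
  by_contra hwS
  exact hc ((hS.2.2 v w (hfib v w hw.symm hwv.symm) hS.1 hwS).2 ▸ hw.symm)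

end Fibers

end SimpleGraph

namespace GallaiChain

open Sum Finset

/- With `k = m + 5`, unit `i` of the chain: the vertices `inl _` form a `K_{m+4}` whose two ports `inl (inl b)` link
consecutive units, and each `inl (inr s)` carries a pendant `K_{m+3}` on the vertices `inr (s, _)`,
attached at `inr (s, none)`. -/
abbrev Vert (m n : ℕ) :=
  Fin (n + 1) × ((Bool ⊕ Fin (m + 2)) ⊕ Fin (m + 2) × Option (Fin (m + 2)))

variable {m n : ℕ}

def cid : Vert m n → Fin (n + 1) × Option (Fin (m + 2))
  | (i, inl _) => (i, none)
  | (i, inr (s, _)) => (i, some s)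

def partner : Vert m n → Option (Vert m n)
  | (i, inl (inl true)) =>
    if h : (i : ℕ) < n then some (⟨i + 1, by omega⟩, inl (inl false)) else none
  | (i, inl (inl false)) =>
    if h : 0 < (i : ℕ) then some (⟨i - 1, by omega⟩, inl (inl true)) else none
  | (i, inl (inr s)) => some (i, inr (s, none))
  | (i, inr (s, none)) => some (i, inl (inr s))
  | (_, inr (_, some _)) => none

lemma partner_eq_some_comm {u v : Vert m n} (h : partner u = some v) : partner v = some u := by
  rcases u with ⟨i, ((_ | _) | s) | ⟨s, _ | t⟩⟩ <;> simp only [partner] at h <;>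
    (try split_ifs at h) <;> cases h <;> simp [partner, Fin.ext_iff]
  all_goals omega

lemma cid_ne_of_partner_eq_some {u v : Vert m n} (h : partner u = some v) : cid u ≠ cid v := by
  rcases u with ⟨i, ((_ | _) | s) | ⟨s, _ | t⟩⟩ <;> simp only [partner] at h <;>
    (try split_ifs at h) <;> cases h <;> simp [cid, Fin.ext_iff]
  all_goals omega

@[simp] lemma cid_fst (u : Vert m n) : (cid u).1 = u.1 := by
  rcases u with ⟨i, _ | _⟩ <;> rfl

def graph (m n : ℕ) : SimpleGraph (Vert m n) where
  Adj u v := (cid u = cid v ∧ u ≠ v) ∨ partner u = some v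
  symm := ⟨fun _ _ => Or.imp (fun h => ⟨h.1.symm, h.2.symm⟩) partner_eq_some_comm⟩
  loopless := ⟨fun _ h => h.elim (fun h => h.2 rfl) (fun h => cid_ne_of_partner_eq_some h rfl)⟩

lemma graph_adj_of_cid_eq {u v : Vert m n} (h : cid u = cid v) (huv : u ≠ v) :
    (graph m n).Adj u v :=
  Or.inl ⟨h, huv⟩

lemma partner_eq_some_of_adj {u v : Vert m n} (h : (graph m n).Adj u v) (hc : cid u ≠ cid v) :
    partner u = some v :=
  h.resolve_left fun h' => hc h'.1

lemma isOnlyEdgeOut_port {i j : Fin (n + 1)} (hij : (i : ℕ) + 1 = j) :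
    (graph m n).IsOnlyEdgeOut {w : Vert m n | w.1 ≤ i}
      (i, inl (inl true)) (j, inl (inl false)) := by
  refine ⟨le_refl i, fun hj : j ≤ i => absurd (Fin.le_iff_val_le_val.1 hj) (by omega), ?_⟩
  rintro ⟨l, x⟩ ⟨l', x'⟩ (⟨hc, -⟩ | h) (hu : l ≤ i) (hv : ¬ l' ≤ i)
  · have hl : l = l' := by simpa using congrArg Prod.fst hc
    exact (hv (hl ▸ hu)).elim
  · rw [Fin.le_iff_val_le_val] at hu hv
    rcases x with ((_ | _) | s) | ⟨s, _ | t⟩ <;> simp only [partner] at h <;>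
      (try split_ifs at h) <;> cases h <;> simp [Fin.ext_iff] at hv ⊢ <;> omega

lemma isOnlyEdgeOut_pendant (i : Fin (n + 1)) (s : Fin (m + 2)) :
    (graph m n).IsOnlyEdgeOut {w | cid w = (i, some s)} (i, inr (s, none)) (i, inl (inr s)) := by
  refine ⟨rfl, by simp [cid], ?_⟩
  rintro u v (⟨hc, -⟩ | h) hu hv
  · exact (hv (hc.symm.trans hu)).elim
  · rcases u with ⟨j, _ | ⟨s', _ | t⟩⟩ <;> simp [cid] at hu <;>
      obtain ⟨rfl, rfl⟩ := hu <;> simp [partner] at h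
    exact ⟨rfl, h.symm⟩

lemma crossEdgesAreBridges : (graph m n).CrossEdgesAreBridges cid := by
  intro u v huv hc
  have h := partner_eq_some_of_adj huv hc
  rcases u with ⟨i, ((_ | _) | s) | ⟨s, _ | t⟩⟩ <;> simp only [partner] at h <;>
    (try split_ifs at h) <;> cases h
  · exact ⟨_, (isOnlyEdgeOut_port (by simp; omega)).compl⟩
  · exact ⟨_, isOnlyEdgeOut_port rfl⟩
  · exact ⟨_, (isOnlyEdgeOut_pendant i s).compl⟩
  · exact ⟨_, isOnlyEdgeOut_pendant i s⟩

lemma reachable_of_cid_eq (u v : Vert m n) (h : cid u = cid v) : (graph m n).Reachable u v := by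
  by_cases huv : u = v
  · exact huv ▸ .refl u
  · exact (graph_adj_of_cid_eq h huv).reachable

lemma reachable_port_zero (i : Fin (n + 1)) :
    (graph m n).Reachable (i, inl (inl false)) (0, inl (inl false)) := by
  induction i using Fin.induction with
  | zero => rfl
  | succ i ih =>
    have hlink : (graph m n).Adj (i.succ, inl (inl false)) (i.castSucc, inl (inl true)) :=
      Or.inr (by simp [partner, Fin.ext_iff])
    have hport : (graph m n).Reachable (i.castSucc, inl (inl true)) (i.castSucc, inl (inl false)) :=
      reachable_of_cid_eq _ _ rfl
    exact hlink.reachable.trans (hport.trans ih)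

lemma connected : (graph m n).Connected := by
  suffices h : ∀ v : Vert m n, (graph m n).Reachable v (v.1, inl (inl false)) from
    ⟨fun u v => ((h u).trans (reachable_port_zero _)).trans
      ((h v).trans (reachable_port_zero _)).symm⟩
  rintro ⟨i, _ | ⟨s, t⟩⟩
  · exact reachable_of_cid_eq _ _ rfl
  · have hbridge : (graph m n).Adj (i, inr (s, none)) (i, inl (inr s)) := Or.inr rfl
    exact (reachable_of_cid_eq (i, inr (s, t)) (i, inr (s, none)) rfl).trans
      (hbridge.reachable.trans (reachable_of_cid_eq (i, inl (inr s)) (i, inl (inl false)) rfl))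

lemma card_cid_eq_inl (i : Fin (n + 1)) (x : Bool ⊕ Fin (m + 2)) :
    #{u : Vert m n | cid u = cid (i, inl x)} = m + 4 := by
  rw [card_filter]
  simp [Fintype.sum_prod_type, cid]
  omega

lemma card_cid_eq_inr (i : Fin (n + 1)) (x : Fin (m + 2) × Option (Fin (m + 2))) :
    #{u : Vert m n | cid u = cid (i, inr x)} = m + 3 := by
  rw [card_filter]
  simp [Fintype.sum_prod_type, cid, ite_and, -sum_boole, sum_add_distrib]
  rw [sum_comm]
  simp
  omega

lemma degree_eq (v : Vert m n) :
    (graph m n).degree v = #{u | cid u = cid v} - 1 + #(partner v).toFinset := by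
  have hdisj :
      Disjoint (({u | cid u = cid v} : Finset (Vert m n)).erase v) (partner v).toFinset := by
    refine disjoint_left.2 fun u hu hp => ?_
    simp only [mem_erase, mem_filter, Option.mem_toFinset] at hu hp
    exact cid_ne_of_partner_eq_some hp hu.2.2.symm
  have hnbr : (graph m n).neighborFinset v =
      ({u | cid u = cid v} : Finset _).erase v ∪ (partner v).toFinset := by
    ext u
    simp only [SimpleGraph.mem_neighborFinset, mem_union, mem_erase, mem_filter, mem_univ, true_and,
      Option.mem_toFinset, Option.mem_def]
    exact or_congr_left (and_comm.trans (and_congr ne_comm eq_comm))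
  rw [← SimpleGraph.card_neighborFinset_eq_degree, hnbr, card_union_of_disjoint hdisj,
    card_erase_of_mem (by simp)]

lemma sum_degrees :
    ∑ v, (graph m n).degree v + 2 = (n + 1) * (m ^ 3 + 8 * m ^ 2 + 25 * m + 30) := by
  simp only [degree_eq, Fintype.sum_prod_type, Fintype.sum_sum_type, Fintype.sum_bool,
    Fintype.sum_option, card_cid_eq_inl, card_cid_eq_inr, partner]
  simp [apply_dite Option.toFinset, apply_dite Finset.card, sum_add_distrib,
    Fin.card_filter_val_lt, Fin.card_filter_univ_succ' (0 < ·)]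
  ring

lemma degree_le (v : Vert m n) : (graph m n).degree v ≤ m + 4 := by
  have hpartner : #(partner v).toFinset ≤ 1 := by cases partner v <;> simp
  rw [degree_eq]
  rcases v with ⟨i, x | x⟩
  · rw [card_cid_eq_inl]; omega
  · rw [card_cid_eq_inr]; omega

lemma card_vert : Nat.card (Vert m n) = (n + 1) * (m ^ 2 + 6 * m + 10) := by
  simp [Nat.card_eq_fintype_card]
  ring

lemma two_mul_card_edgeSet :
    2 * Nat.card (graph m n).edgeSet + 2 = (n + 1) * (m ^ 3 + 8 * m ^ 2 + 25 * m + 30) := by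
  rw [← sum_degrees, SimpleGraph.sum_degrees_eq_twice_card_edges, Nat.card_eq_fintype_card,
    SimpleGraph.edgeFinset_card]

lemma memTk : ATPaper.MemTk (graph m n) (m + 5) := by
  refine ⟨⟨connected, fun B hB => Or.inl ?_⟩, fun v => ?_, ?_⟩
  · exact SimpleGraph.isClique_of_connected_of_noCutVtx crossEdgesAreBridges
      (fun _ _ => graph_adj_of_cid_eq) hB.1 hB.2.1
  · rw [Nat.card_eq_fintype_card, SimpleGraph.card_neighborSet_eq_degree]
    exact degree_le v
  · rintro ⟨e⟩
    have := Nat.card_congr e.toEquiv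
    rw [card_vert, Nat.card_eq_fintype_card, Fintype.card_fin] at this
    nlinarith

lemma hasClique : ATPaper.HasClique (graph m n) (m + 4) :=
  ⟨({u | cid u = cid ((0 : Fin (n + 1)), inl (inl true))} : Finset (Vert m n)),
    ⟨fun _ hu _ hv huv =>
      graph_adj_of_cid_eq ((mem_filter.1 hu).2.trans (mem_filter.1 hv).2.symm) huv,
      card_cid_eq_inl _ _⟩⟩

lemma eq_port_of_mem_wk {v : Vert m n} (hv : v ∈ ATPaper.Wk (graph m n) (m + 5))
    (hpre : ((graph m n).induce {v}ᶜ).Preconnected) :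
    v = (Fin.last n, inl (inl true)) ∨ v = (0, inl (inl false)) := by
  obtain ⟨S, hS, hvS⟩ := hv
  have hcard : S.card = m + 4 := hS.card_eq
  have hcid : ∀ u ∈ S, cid u = cid v := fun u hu =>
    hS.isClique.eq_of_three_le_card crossEdgesAreBridges (by omega) hu hvS
  have hpartner : partner v = none := by
    refine Option.eq_none_iff_forall_ne_some.2 fun y hy => ?_
    obtain ⟨w, hwS, hwv⟩ := S.exists_mem_ne (by omega) v
    exact SimpleGraph.not_preconnected_induce_compl_of_adj crossEdgesAreBridges
      (fun _ _ => graph_adj_of_cid_eq) (Or.inr hy) (cid_ne_of_partner_eq_some hy) (hcid w hwS) hwv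
      hpre
  rcases v with ⟨i, ((_ | _) | s) | x⟩
  · simp [partner] at hpartner
    simp [Fin.ext_iff, hpartner]
  · simp [partner] at hpartner
    exact Or.inl (Prod.ext (Fin.ext (by simp; omega)) rfl)
  · simp [partner] at hpartner
  · have := card_le_card fun u hu => mem_filter.2 ⟨mem_univ u, hcid u hu⟩
    rw [hcard, card_cid_eq_inr] at this
    omega

lemma qT_le_two : ATPaper.qT (graph m n) (m + 5) ≤ 2 := by
  rw [ATPaper.qT, Nat.card_coe_set_eq]
  calc _ ≤ ({(Fin.last n, inl (inl true)), (0, inl (inl false))} : Set (Vert m n)).ncard :=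
        Set.ncard_le_ncard (fun v hv => eq_port_of_mem_wk hv.1 hv.2) (Set.toFinite _)
    _ ≤ 2 := (Set.ncard_insert_le _ _).trans (by rw [Set.ncard_singleton])

end GallaiChain

lemma le_of_forall_nat_mul_sub_le {x y C : ℝ} (h : ∀ n : ℕ, x * (n + 1) - C ≤ y * (n + 1)) :
    x ≤ y := by
  by_contra hxy
  push Not at hxy
  obtain ⟨n, hn⟩ := exists_nat_gt (C / (x - y))
  rw [div_lt_iff₀ (sub_pos.2 hxy)] at hn
  nlinarith [h n]

/-- optimality of `p(k) = (3k-5)/(k²-4k+5)`. -/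
theorem stmt_8 (k : ℕ) (hk : 5 ≤ k) (p f h : ℝ)
    (H : ∀ (W : Type) [Fintype W] (T : SimpleGraph W), ATPaper.MemTk T k →
      ATPaper.HasClique T (k - 1) →
      2 * (Nat.card T.edgeSet : ℝ) ≤
        ((k : ℝ) - 3 + p) * (Nat.card W : ℝ) + f + h * (ATPaper.qT T k : ℝ)) :
    p ≥ (3 * (k : ℝ) - 5) / ((k : ℝ) ^ 2 - 4 * (k : ℝ) + 5) := by
  obtain ⟨m, rfl⟩ : ∃ m, k = m + 5 := ⟨k - 5, by omega⟩
  have key (n : ℕ) : (3 * (m : ℝ) + 10) * (n + 1) - (2 + f + 2 * |h|) ≤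
      p * ((m : ℝ) ^ 2 + 6 * m + 10) * (n + 1) := by
    have hT := H _ (GallaiChain.graph m n) GallaiChain.memTk GallaiChain.hasClique
    have hE : (2 * Nat.card (GallaiChain.graph m n).edgeSet + 2 : ℝ) =
        (n + 1) * ((m : ℝ) ^ 3 + 8 * m ^ 2 + 25 * m + 30) := by
      exact_mod_cast GallaiChain.two_mul_card_edgeSet
    have hq : (ATPaper.qT (GallaiChain.graph m n) (m + 5) : ℝ) ≤ 2 := by
      exact_mod_cast GallaiChain.qT_le_two
    rw [GallaiChain.card_vert] at hT
    push_cast at hT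
    linarith [mul_nonneg (sub_nonneg.2 (le_abs_self h)) (Nat.cast_nonneg (α := ℝ)
      (ATPaper.qT (GallaiChain.graph m n) (m + 5))), mul_nonneg (abs_nonneg h) (sub_nonneg.2 hq)]
  rw [ge_iff_le, div_le_iff₀ (by push_cast; nlinarith)]
  push_cast
  linarith [le_of_forall_nat_mul_sub_le key]
end
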